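/- arXiv:2504.07455 — 9 statements merged into one kernel-verified Lean document; each statement's English description precedes it below -/
import Mathlib

section
/- Let 𝔅 denote the relation (ℕ → ℕ, ℕ → ℕ, R) where f R g iff ¬(g <* f), so that ‖𝔅‖ = 𝔟. Let A = (A₋, A₊, S) be any relation such that no single element of A₊ solves every problem in A₋ (i.e., ‖A‖ > 1). If there exists a morphism φ : 𝔅 → A, then |A₋| ≥ 𝔡. -/
open Filter

/-- `g <* f` : `f` dominates `g`, i.e. `g n < f n` for all but finitely many `n`. -/
def DominatedBy (g f : ℕ → ℕ) : Prop := ∀ᶠ n in atTop, g n < f n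

/-- The dominating number `𝔡`. -/
noncomputable def frakD : Cardinal :=
  sInf {c | ∃ D : Set (ℕ → ℕ), (∀ g : ℕ → ℕ, ∃ f ∈ D, DominatedBy g f) ∧ Cardinal.mk D = c}

/-- Let `𝔅 = (ℕ → ℕ, ℕ → ℕ, R)` with `f R g ↔ ¬ (g <* f)` (so `‖𝔅‖ = 𝔟`), and let
`A = (A₋, A₊, S)` be a relation such that no single element of `A₊` solves every
problem in `A₋` (i.e. `‖A‖ > 1`).  If `φ = (φm, φp)` is a morphism from `𝔅` to `A`,
then `|A₋| ≥ 𝔡`. -/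
theorem card_ge_frakD_of_morphism_from_bounding
    {Aminus Aplus : Type} (S : Aminus → Aplus → Prop)
    (hA : ¬ ∃ y : Aplus, ∀ x : Aminus, S x y)
    (φm : Aminus → (ℕ → ℕ)) (φp : (ℕ → ℕ) → Aplus)
    (hφ : ∀ (a : Aminus) (g : ℕ → ℕ), ¬ DominatedBy g (φm a) → S a (φp g)) :
    frakD ≤ Cardinal.mk Aminus := by
  have hdom : ∀ g : ℕ → ℕ, ∃ f ∈ Set.range φm, DominatedBy g f := by
    intro g
    by_contra h
    push_neg at h
    exact hA ⟨φp g, fun a => hφ a g (h (φm a) ⟨a, rfl⟩)⟩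
  have h1 : frakD ≤ Cardinal.mk (Set.range φm) :=
    csInf_le' ⟨Set.range φm, hdom, rfl⟩
  exact h1.trans Cardinal.mk_range_le
end

section
/- A set M ⊆ 2^ℕ is meager (in the product topology on Cantor space) if and only if there exists a chopped real (f, Π) such that no member of M matches (f, Π). -/
open Set

/-- A real `y : ℕ → Bool` *matches* the chopped real `(f, Π)`, where the interval
partition `Π` is given by the strictly increasing sequence `a` with `a 0 = 0`
(its intervals being `[a k, a (k+1))`), if `y` agrees with `f` on infinitely many
intervals of the partition. -/
def Matches (y f : ℕ → Bool) (a : ℕ → ℕ) : Prop :=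
  {k : ℕ | ∀ n ∈ Set.Ico (a k) (a (k + 1)), y n = f n}.Infinite

/-- From an open set, extract a cylinder neighborhood. -/
lemma exists_cylinder_subset {U : Set (ℕ → Bool)} (hU : IsOpen U) {y : ℕ → Bool}
    (hy : y ∈ U) : ∃ n, PiNat.cylinder y n ⊆ U := by
  obtain ⟨v, ⟨x, n, rfl⟩, hyv, hvU⟩ :=
    (PiNat.isTopologicalBasis_cylinders (fun _ : ℕ => Bool)).exists_subset_of_mem_open hy hU
  exact ⟨n, (PiNat.mem_cylinder_iff_eq.1 hyv) ▸ hvU⟩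

/-- The set of points agreeing with `f` on the interval `[s, t)` is open. -/
lemma isOpen_agree (f : ℕ → Bool) (s t : ℕ) :
    IsOpen {y : ℕ → Bool | ∀ n ∈ Set.Ico s t, y n = f n} := by
  have : {y : ℕ → Bool | ∀ n ∈ Set.Ico s t, y n = f n}
      = ⋂ n ∈ Finset.Ico s t, (fun y : ℕ → Bool => y n) ⁻¹' {f n} := by
    ext y; simp [Set.mem_Ico]
  rw [this]
  exact isOpen_biInter_finset fun n _ => (isOpen_discrete _).preimage (continuous_apply n)

/-- Forcing lemma: given a dense open set `D` and a position `t`, there is a later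
position `m` and values `g` on `[t, m)` such that any point taking these values on
`[t, m)` belongs to `D`, regardless of its other coordinates. -/
lemma exists_force {D : Set (ℕ → Bool)} (hDo : IsOpen D) (hDd : Dense D) (t : ℕ) :
    ∃ p : ℕ × (ℕ → Bool), t < p.1 ∧
      ∀ y : ℕ → Bool, (∀ i, t ≤ i → i < p.1 → y i = p.2 i) → y ∈ D := by
  -- first, a forcing statement for each finite set of prefixes
  have key : ∀ S : Finset (Fin t → Bool), ∃ s : ℕ, t ≤ s ∧ ∃ g : ℕ → Bool,
      ∀ σ ∈ S, ∀ y : ℕ → Bool, (∀ i : Fin t, y i = σ i) →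
        (∀ i, t ≤ i → i < s → y i = g i) → y ∈ D := by
    intro S
    induction S using Finset.induction with
    | empty => exact ⟨t, le_rfl, fun _ => false, by simp⟩
    | @insert σ S hσS ih =>
      obtain ⟨s, hts, g, hg⟩ := ih
      -- the point whose prefix is σ and whose tail on `[t, s)` is `g`
      set z : ℕ → Bool := fun i => if h : i < t then σ ⟨i, h⟩ else g i with hz
      obtain ⟨w, hwz, hwD⟩ := dense_iff_inter_open.1 hDd _ (PiNat.isOpen_cylinder (fun _ : ℕ => Bool) z s)
        ⟨z, PiNat.self_mem_cylinder z s⟩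
      obtain ⟨m, hm⟩ := exists_cylinder_subset hDo hwD
      refine ⟨max s m, le_trans hts (le_max_left _ _),
        fun i => if i < s then g i else w i, ?_⟩
      intro τ hτ y hyτ hyg
      rcases Finset.mem_insert.1 hτ with rfl | hτS
      · -- new prefix: y agrees with w on `[0, max s m)`
        apply hm
        intro i him
        have hiw : ∀ j < s, y j = w j := by
          intro j hjs
          have hwzj : w j = z j := hwz j hjs
          by_cases hjt : j < t
          · rw [hyτ ⟨j, hjt⟩, hwzj, hz]; simp [hjt]
          · have h1 := hyg j (not_lt.1 hjt) (lt_of_lt_of_le hjs (le_max_left s m))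
            simp only [if_pos hjs] at h1
            rw [h1, hwzj, hz]; simp [hjt]
        by_cases his : i < s
        · exact hiw i his
        · have hti : t ≤ i := le_trans hts (not_lt.1 his)
          have h2 := hyg i hti (lt_max_iff.2 (Or.inr him))
          simpa only [if_neg his] using h2
      · refine hg τ hτS y hyτ fun i hti his => ?_
        have h3 := hyg i hti (lt_of_lt_of_le his (le_max_left _ _))
        simpa only [if_pos his] using h3
  obtain ⟨s, hts, g, hg⟩ := key Finset.univ
  refine ⟨(s + 1, g), lt_of_le_of_lt hts (Nat.lt_succ_self s), fun y hy => ?_⟩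
  exact hg (fun i : Fin t => y i) (Finset.mem_univ _) y (fun _ => rfl)
    fun i hti his => hy i hti (lt_trans his (Nat.lt_succ_self s))

/-- A set `M ⊆ 2^ℕ` is meager (in the product topology on Cantor space) if and only
if there is a chopped real `(f, Π)` that no member of `M` matches. -/
theorem isMeagre_iff_exists_chopped_real (M : Set (ℕ → Bool)) :
    IsMeagre M ↔
      ∃ (f : ℕ → Bool) (a : ℕ → ℕ), StrictMono a ∧ a 0 = 0 ∧
        ∀ y ∈ M, ¬ Matches y f a := by
  constructor
  · intro hM
    rw [IsMeagre] at hM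
    obtain ⟨S, hSo, hSd, hSc, hSsub⟩ := mem_residual_iff.1 hM
    -- turn `S` into a sequence of dense open sets
    obtain ⟨D, hD⟩ := (hSc.insert Set.univ).exists_eq_range (insert_nonempty _ _)
    have hDmem : ∀ n, D n = Set.univ ∨ D n ∈ S := by
      intro n
      have : D n ∈ insert Set.univ S := hD ▸ Set.mem_range_self n
      simpa using this
    have hDo : ∀ n, IsOpen (D n) := fun n => by
      rcases hDmem n with h | h
      · rw [h]; exact isOpen_univ
      · exact hSo _ h
    have hDd : ∀ n, Dense (D n) := fun n => by
      rcases hDmem n with h | h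
      · rw [h]; exact dense_univ
      · exact hSd _ h
    have hDsub : (⋂ n, D n) ⊆ Mᶜ := by
      intro y hy
      apply hSsub
      intro s hs
      have : s ∈ insert Set.univ S := Set.mem_insert_of_mem _ hs
      rw [hD] at this
      obtain ⟨n, rfl⟩ := this
      exact Set.mem_iInter.1 hy n
    -- finite intersections
    let E : ℕ → Set (ℕ → Bool) := fun k =>
      Nat.rec (D 0) (fun k Ek => Ek ∩ D (k + 1)) k
    have hEo : ∀ k, IsOpen (E k) := by
      intro k; induction k with
      | zero => exact hDo 0
      | succ k ih => exact ih.inter (hDo (k + 1))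
    have hEd : ∀ k, Dense (E k) := by
      intro k; induction k with
      | zero => exact hDd 0
      | succ k ih => exact ih.inter_of_isOpen_left (hDd (k + 1)) (hEo k)
    have hEsub : ∀ k n, n ≤ k → E k ⊆ D n := by
      intro k
      induction k with
      | zero => intro n hn; interval_cases n; exact subset_rfl
      | succ k ih =>
        intro n hn
        rcases Nat.lt_succ_iff_lt_or_eq.1 (Nat.lt_succ_of_le hn) with h | rfl
        · exact Set.inter_subset_left.trans (ih n (Nat.lt_succ_iff.1 h))
        · exact Set.inter_subset_right
    -- the recursion producing the chopped real
    choose p hp1 hp2 using fun (k t : ℕ) => exists_force (hEo k) (hEd k) t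
    let c : ℕ → ℕ × (ℕ → Bool) := fun k =>
      Nat.rec ((0 : ℕ), fun _ => false)
        (fun k ck => ((p k ck.1).1,
          fun i => if i < ck.1 then ck.2 i else (p k ck.1).2 i)) k
    have c_succ : ∀ k, c (k + 1) = ((p k (c k).1).1,
        fun i => if i < (c k).1 then (c k).2 i else (p k (c k).1).2 i) := fun k => rfl
    set a : ℕ → ℕ := fun k => (c k).1 with haa
    have ha : StrictMono a := strictMono_nat_of_lt_succ fun k => hp1 k (c k).1
    set f : ℕ → Bool := fun n => (c (n + 1)).2 n with hf
    -- stability of the recursion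
    have stab : ∀ k j n, n < a k → (c (k + j)).2 n = (c k).2 n := by
      intro k j
      induction j with
      | zero => intro n _; rfl
      | succ j ih =>
        intro n hn
        have hlt : n < (c (k + j)).1 := lt_of_lt_of_le hn (ha.monotone (Nat.le_add_right k j))
        show (if n < (c (k + j)).1 then (c (k + j)).2 n
          else (p (k + j) (c (k + j)).1).2 n) = (c k).2 n
        rw [if_pos hlt]
        exact ih n hn
    have hfc : ∀ k n, n < a (k + 1) → f n = (c (k + 1)).2 n := by
      intro k n hn
      have hn1 : n < a (n + 1) := lt_of_lt_of_le (Nat.lt_succ_self n) ha.le_apply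
      rcases le_total (k + 1) (n + 1) with h | h
      · obtain ⟨j, hj⟩ := Nat.exists_eq_add_of_le h
        show (c (n + 1)).2 n = (c (k + 1)).2 n
        rw [hj]
        exact stab (k + 1) j n hn
      · obtain ⟨j, hj⟩ := Nat.exists_eq_add_of_le h
        show (c (n + 1)).2 n = (c (k + 1)).2 n
        rw [hj]
        exact (stab (n + 1) j n hn1).symm
    -- the forcing property of the intervals
    have hforce : ∀ k (y : ℕ → Bool),
        (∀ i ∈ Set.Ico (a k) (a (k + 1)), y i = f i) → y ∈ E k := by
      intro k y hy
      apply hp2 k (c k).1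
      intro i hi1 hi2
      have hia : i < a (k + 1) := hi2
      have h1 : y i = f i := hy i ⟨hi1, hia⟩
      rw [h1, hfc k i hia]
      show (if i < (c k).1 then (c k).2 i else (p k (c k).1).2 i) = (p k (c k).1).2 i
      rw [if_neg (not_lt.2 hi1)]
    refine ⟨f, a, ha, rfl, ?_⟩
    intro y hyM hmatch
    have hyD : y ∈ ⋂ n, D n := by
      refine Set.mem_iInter.2 fun n => ?_
      obtain ⟨k, hkmem, hnk⟩ := hmatch.exists_gt n
      exact hEsub k n hnk.le (hforce k y hkmem)
    exact hDsub hyD hyM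
  · rintro ⟨f, a, ha, ha0, hM⟩
    rw [IsMeagre]
    set B : ℕ → Set (ℕ → Bool) := fun N =>
      {y | ∃ k, N ≤ k ∧ ∀ n ∈ Set.Ico (a k) (a (k + 1)), y n = f n} with hB
    have hBo : ∀ N, IsOpen (B N) := by
      intro N
      have : B N = ⋃ k, ⋃ _ : N ≤ k,
          {y : ℕ → Bool | ∀ n ∈ Set.Ico (a k) (a (k + 1)), y n = f n} := by
        ext y; simp [hB]
      rw [this]
      exact isOpen_iUnion fun k => isOpen_iUnion fun _ => isOpen_agree f _ _
    have hBd : ∀ N, Dense (B N) := by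
      intro N
      rw [dense_iff_inter_open]
      rintro U hU ⟨z, hz⟩
      obtain ⟨m, hm⟩ := exists_cylinder_subset hU hz
      set k := max N m with hk
      have hak : m ≤ a k := le_trans (le_max_right N m) ha.le_apply
      refine ⟨fun i => if i < a k then z i else f i,
        hm (PiNat.mem_cylinder_iff.2 fun i him => if_pos (lt_of_lt_of_le him hak)),
        k, le_max_left _ _, ?_⟩
      intro n hn
      exact if_neg (not_lt.2 hn.1)
    have hsub : (⋂ N, B N) ⊆ Mᶜ := by
      intro y hy hyM
      apply hM y hyM
      apply Set.infinite_of_not_bddAbove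
      rintro ⟨b, hb⟩
      obtain ⟨k, hk, hagree⟩ := Set.mem_iInter.1 hy (b + 1)
      exact absurd (hb hagree) (by omega)
    exact Filter.mem_of_superset
      (countable_iInter_mem.2 fun N => residual_of_dense_open (hBo N) (hBd N)) hsub
end

section
/- Let (f, Π) and (g, Π′) be chopped reals. Then Match(f, Π) ⊆ Match(g, Π′) if and only if for all but finitely many intervals I ∈ Π there exists an interval J ∈ Π′ such that J ⊆ I and g agrees with f on J. -/
open Filter

/-- `Match(f, Π)`: the set of reals matching the chopped real `(f, Π)`. -/
def MatchSet (f : ℕ → Bool) (a : ℕ → ℕ) : Set (ℕ → Bool) :=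
  {y | Matches y f a}

/-- Two intervals of a partition containing a common point are equal. -/
lemma ico_index_eq {a : ℕ → ℕ} (ha : StrictMono a) {k k' n : ℕ}
    (h1 : n ∈ Set.Ico (a k) (a (k + 1))) (h2 : n ∈ Set.Ico (a k') (a (k' + 1))) :
    k = k' := by
  by_contra hne
  rcases Nat.lt_or_ge k k' with h | h
  · have : a (k + 1) ≤ a k' := ha.monotone h
    obtain ⟨_, h1b⟩ := h1; obtain ⟨h2a, _⟩ := h2; omega
  · have hk : k' < k := lt_of_le_of_ne h (Ne.symm hne)
    have : a (k' + 1) ≤ a k := ha.monotone hk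
    obtain ⟨h1a, _⟩ := h1; obtain ⟨_, h2b⟩ := h2; omega

/-- From an infinite set of naturals one can extract a spaced-out sequence. -/
lemma exists_spaced {B : Set ℕ} (hB : B.Infinite) :
    ∃ c : ℕ → ℕ, (∀ n, c n ∈ B) ∧ ∀ n, c n + 1 < c (n + 1) := by
  have hex : ∀ m : ℕ, ∃ k, k ∈ B ∧ m < k := fun m => hB.exists_gt m
  choose F hF1 hF2 using hex
  refine ⟨fun n => Nat.rec (F 0) (fun _ prev => F (prev + 1)) n, fun n => ?_, fun n => ?_⟩
  · cases n with
    | zero => exact hF1 0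
    | succ m => exact hF1 _
  · exact hF2 _

/-- For chopped reals `(f, Π)` and `(g, Π′)` (with `Π`, `Π′` given by strictly
increasing sequences `a`, `b` starting at `0`): `Match(f, Π) ⊆ Match(g, Π′)` iff for
all but finitely many intervals `I ∈ Π` there is an interval `J ∈ Π′` with `J ⊆ I`
and `g` agreeing with `f` on `J`. -/
theorem matchSet_subset_iff (f g : ℕ → Bool) (a b : ℕ → ℕ)
    (ha : StrictMono a) (ha0 : a 0 = 0) (hb : StrictMono b) (hb0 : b 0 = 0) :
    MatchSet f a ⊆ MatchSet g b ↔
      ∀ᶠ k in atTop, ∃ j : ℕ,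
        Set.Ico (b j) (b (j + 1)) ⊆ Set.Ico (a k) (a (k + 1)) ∧
        ∀ n ∈ Set.Ico (b j) (b (j + 1)), g n = f n := by
  classical
  constructor
  · intro hsub
    by_contra hfin
    rw [Filter.not_eventually] at hfin
    rw [Nat.frequently_atTop_iff_infinite] at hfin
    obtain ⟨c, hcB, hcs⟩ := exists_spaced hfin
    have hcm : StrictMono c := strictMono_nat_of_lt_succ (fun n => by have := hcs n; omega)
    set y : ℕ → Bool :=
      fun n => if ∃ m, n ∈ Set.Ico (a (c m)) (a (c m + 1)) then f n else !g n with hydef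
    have hyval : ∀ n, y n = if ∃ m, n ∈ Set.Ico (a (c m)) (a (c m + 1)) then f n else !g n :=
      fun n => rfl
    have hyf : y ∈ MatchSet f a := by
      apply Set.infinite_of_injective_forall_mem (f := c) hcm.injective
      intro m n hn
      rw [hyval n, if_pos ⟨m, hn⟩]
    have hyg := hsub hyf
    have hempty : ∀ j, ¬ (∀ n ∈ Set.Ico (b j) (b (j + 1)), y n = g n) := by
      intro j hj
      have hbj : b j ∈ Set.Ico (b j) (b (j + 1)) := ⟨le_refl _, hb (Nat.lt_succ_self j)⟩
      have key : ∀ n ∈ Set.Ico (b j) (b (j + 1)),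
          ∃ m, n ∈ Set.Ico (a (c m)) (a (c m + 1)) := by
        intro n hn
        by_contra hno
        have h1 := hj n hn
        rw [hyval n, if_neg hno] at h1
        exact (Bool.not_ne_self (g n)) h1
      obtain ⟨m0, hm0⟩ := key (b j) hbj
      have hJsub : Set.Ico (b j) (b (j + 1)) ⊆ Set.Ico (a (c m0)) (a (c m0 + 1)) := by
        intro n hn
        refine ⟨le_trans hm0.1 hn.1, ?_⟩
        by_contra hge
        push_neg at hge
        have hmem : a (c m0 + 1) ∈ Set.Ico (b j) (b (j + 1)) :=
          ⟨le_of_lt hm0.2, lt_of_le_of_lt hge hn.2⟩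
        obtain ⟨m1, hm1⟩ := key _ hmem
        have h1 : c m1 ≤ c m0 + 1 := ha.le_iff_le.mp hm1.1
        have h2 : c m0 + 1 < c m1 + 1 := ha.lt_iff_lt.mp hm1.2
        have heq : c m1 = c m0 + 1 := by omega
        rcases lt_trichotomy m1 m0 with h | h | h
        · have := hcm h; omega
        · subst h; omega
        · have h3 : c m0 + 1 < c (m0 + 1) := hcs m0
          have h4 : c (m0 + 1) ≤ c m1 := hcm.monotone h
          omega
      have hgf : ∀ n ∈ Set.Ico (b j) (b (j + 1)), g n = f n := by
        intro n hn
        have h1 := hj n hn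
        have h2 : y n = f n := by rw [hyval n, if_pos (key n hn)]
        rw [← h1, h2]
      exact hcB m0 ⟨j, hJsub, hgf⟩
    have hT : {j : ℕ | ∀ n ∈ Set.Ico (b j) (b (j + 1)), y n = g n} = ∅ :=
      Set.eq_empty_iff_forall_notMem.2 hempty
    have hinf : ({j : ℕ | ∀ n ∈ Set.Ico (b j) (b (j + 1)), y n = g n}).Infinite := hyg
    rw [hT] at hinf
    exact hinf Set.finite_empty
  · intro h y hy
    rw [eventually_atTop] at h
    obtain ⟨K, hK⟩ := h
    have hM : ({k : ℕ | ∀ n ∈ Set.Ico (a k) (a (k + 1)), y n = f n} \ Set.Iio K).Infinite :=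
      hy.diff (Set.finite_Iio K)
    have hch : ∀ k : ↥({k : ℕ | ∀ n ∈ Set.Ico (a k) (a (k + 1)), y n = f n} \ Set.Iio K),
        ∃ j, Set.Ico (b j) (b (j + 1)) ⊆ Set.Ico (a (k : ℕ)) (a ((k : ℕ) + 1)) ∧
          ∀ n ∈ Set.Ico (b j) (b (j + 1)), g n = f n := by
      rintro ⟨k, hk⟩
      exact hK k (not_lt.1 hk.2)
    choose F hF1 hF2 using hch
    have : Infinite ↥({k : ℕ | ∀ n ∈ Set.Ico (a k) (a (k + 1)), y n = f n} \ Set.Iio K) :=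
      hM.to_subtype
    apply Set.infinite_of_injective_forall_mem (f := F)
    · intro k1 k2 heq
      have hne : b (F k1) ∈ Set.Ico (b (F k1)) (b (F k1 + 1)) :=
        ⟨le_refl _, hb (Nat.lt_succ_self _)⟩
      have h1 := hF1 k1 hne
      have h2 : b (F k1) ∈ Set.Ico (a (k2 : ℕ)) (a ((k2 : ℕ) + 1)) :=
        hF1 k2 (by rw [heq]; exact ⟨le_refl _, hb (Nat.lt_succ_self _)⟩)
      exact Subtype.ext (ico_index_eq ha h1 h2)
    · intro k n hn
      have h1 : n ∈ Set.Ico (a (k : ℕ)) (a ((k : ℕ) + 1)) := hF1 k hn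
      have h2 : y n = f n := k.2.1 n h1
      have h3 : g n = f n := hF2 k n hn
      rw [h2, h3]
end

section
/- add(𝓑) ≤ 𝔟 ≤ non(𝓑) and cov(𝓑) ≤ 𝔡 ≤ cof(𝓑). -/
open Filter

/-- `add(I)`: the least cardinality of a subfamily `A ⊆ I` whose union is not in `I`. -/
noncomputable def addIdeal {X : Type*} (I : Set (Set X)) : Cardinal :=
  sInf {c | ∃ A ⊆ I, ⋃₀ A ∉ I ∧ Cardinal.mk A = c}

/-- `cov(I)`: the least cardinality of a subfamily `A ⊆ I` whose union is all of `X`. -/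
noncomputable def covIdeal {X : Type*} (I : Set (Set X)) : Cardinal :=
  sInf {c | ∃ A ⊆ I, ⋃₀ A = Set.univ ∧ Cardinal.mk A = c}

/-- `non(I)`: the least cardinality of a subset of `X` not in `I`. -/
noncomputable def nonIdeal {X : Type*} (I : Set (Set X)) : Cardinal :=
  sInf {c | ∃ A : Set X, A ∉ I ∧ Cardinal.mk A = c}

/-- `cof(I)`: the least cardinality of a subfamily `A ⊆ I` such that every member
of `I` is contained in some member of `A`. -/
noncomputable def cofIdeal {X : Type*} (I : Set (Set X)) : Cardinal :=
  sInf {c | ∃ A ⊆ I, (∀ B ∈ I, ∃ C ∈ A, B ⊆ C) ∧ Cardinal.mk A = c}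

/-- The ideal `𝓑` of meager subsets of Cantor space `2^ℕ` (with the product topology). -/
def meagerIdeal : Set (Set (ℕ → Bool)) := {s | IsMeagre s}

/-- The basic clopen cylinder in Cantor space determined by the finite partial
condition `v` on coordinates in `s`; its coin-flipping measure is `2⁻¹ ^ s.card`. -/
def Cyl (s : Finset ℕ) (v : ℕ → Bool) : Set (ℕ → Bool) :=
  {x | ∀ n ∈ s, x n = v n}

/-- A set is null for the coin-flipping product probability measure on `2^ℕ` iff
for every `ε > 0` it can be covered by countably many basic cylinders whose
measures sum to at most `ε`. -/
def IsNullCantor (A : Set (ℕ → Bool)) : Prop :=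
  ∀ ε : ENNReal, 0 < ε → ∃ (F : ℕ → Finset ℕ) (v : ℕ → ℕ → Bool),
    A ⊆ ⋃ k, Cyl (F k) (v k) ∧ (∑' k, (2 : ENNReal)⁻¹ ^ (F k).card) ≤ ε

/-- The ideal `𝓛` of null subsets of Cantor space `2^ℕ` with respect to the
coin-flipping product probability measure. -/
def nullIdeal : Set (Set (ℕ → Bool)) := {s | IsNullCantor s}

/-- The bounding number `𝔟`. -/
noncomputable def frakB : Cardinal :=
  sInf {c | ∃ B : Set (ℕ → ℕ), (∀ f : ℕ → ℕ, ∃ g ∈ B, ¬ DominatedBy g f) ∧ Cardinal.mk B = c}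


section CantorAux

/-- membership in a nhds gives a cylinder neighborhood -/
lemma cylinder_subset_of_mem_nhds {x : ℕ → Bool} {s : Set (ℕ → Bool)} (hs : s ∈ nhds x) :
    ∃ m : ℕ, ∀ z : ℕ → Bool, (∀ k < m, z k = x k) → z ∈ s := by
  rw [nhds_pi, Filter.mem_pi] at hs
  obtain ⟨I, hIfin, t, ht, hsub⟩ := hs
  obtain ⟨m, hm⟩ := hIfin.bddAbove
  refine ⟨m + 1, fun z hz => hsub ?_⟩
  intro i hi
  have h1 : z i = x i := hz i (by have := hm hi; omega)
  rw [h1]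
  exact mem_of_mem_nhds (ht i)

def Mset (E : ℕ → ℕ) (y : ℕ → Bool) : Set (ℕ → Bool) :=
  {x | ∀ᶠ n in atTop, ∃ k, E n ≤ k ∧ k < E (n+1) ∧ x k ≠ y k}

def Cset (E : ℕ → ℕ) (y : ℕ → Bool) (N : ℕ) : Set (ℕ → Bool) :=
  {x | ∀ n, N ≤ n → ∃ k, E n ≤ k ∧ k < E (n+1) ∧ x k ≠ y k}

lemma isClosed_Cset (E : ℕ → ℕ) (y : ℕ → Bool) (N : ℕ) : IsClosed (Cset E y N) := by
  have h : Cset E y N =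
      ⋂ n ∈ {n : ℕ | N ≤ n}, ⋃ k ∈ Finset.Ico (E n) (E (n+1)), {x : ℕ → Bool | x k ≠ y k} := by
    ext x
    simp [Cset, Finset.mem_Ico, and_assoc]
  rw [h]
  refine isClosed_biInter fun n _ => ?_
  refine Set.Finite.isClosed_biUnion (Finset.finite_toSet _) fun k _ => ?_
  have : {x : ℕ → Bool | x k ≠ y k} = (fun x : ℕ → Bool => x k) ⁻¹' {y k}ᶜ := rfl
  rw [this]
  exact (isClosed_discrete _).preimage (continuous_apply k)

lemma interior_Cset {E : ℕ → ℕ} (hE : StrictMono E) (y : ℕ → Bool) (N : ℕ) :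
    interior (Cset E y N) = ∅ := by
  by_contra h
  obtain ⟨x, hx⟩ := Set.nonempty_iff_ne_empty.2 h
  have hmem : Cset E y N ∈ nhds x := mem_interior_iff_mem_nhds.1 hx
  obtain ⟨m, hm⟩ := cylinder_subset_of_mem_nhds hmem
  set n := max N m with hn
  have hz : (fun k => if k < E n then x k else y k) ∈ Cset E y N := by
    refine hm _ (fun k hk => ?_)
    have : k < E n := lt_of_lt_of_le hk (le_trans (le_max_right N m) hE.le_apply)
    simp [this]
  obtain ⟨k, hk1, hk2, hk3⟩ := hz n (le_max_left N m)
  have hnk : ¬ k < E n := not_lt.2 hk1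
  simp [hnk] at hk3

lemma isMeagre_Mset {E : ℕ → ℕ} (hE : StrictMono E) (y : ℕ → Bool) : IsMeagre (Mset E y) := by
  rw [isMeagre_iff_countable_union_isNowhereDense]
  refine ⟨Set.range (Cset E y), ?_, Set.countable_range _, ?_⟩
  · rintro t ⟨N, rfl⟩
    exact (isClosed_Cset E y N).isNowhereDense_iff.2 (interior_Cset hE y N)
  · intro x hx
    obtain ⟨N, hN⟩ := eventually_atTop.1 hx
    exact ⟨Cset E y N, ⟨N, rfl⟩, hN⟩

lemma isMeagre_union {s t : Set (ℕ → Bool)} (hs : IsMeagre s) (ht : IsMeagre t) :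
    IsMeagre (s ∪ t) := by
  rw [IsMeagre, Set.compl_union]
  exact Filter.inter_mem hs ht

lemma isMeagre_evtConst (b : Bool) :
    IsMeagre {x : ℕ → Bool | ∀ᶠ m in atTop, x m = b} := by
  rw [isMeagre_iff_countable_union_isNowhereDense]
  refine ⟨Set.range (fun N => {x : ℕ → Bool | ∀ m, N ≤ m → x m = b}), ?_, Set.countable_range _, ?_⟩
  · rintro t ⟨N, rfl⟩
    have hc : IsClosed {x : ℕ → Bool | ∀ m, N ≤ m → x m = b} := by
      have h : {x : ℕ → Bool | ∀ m, N ≤ m → x m = b} =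
          ⋂ m ∈ {m : ℕ | N ≤ m}, (fun x : ℕ → Bool => x m) ⁻¹' {b} := by
        ext x; simp
      rw [h]
      exact isClosed_biInter fun m _ => (isClosed_discrete _).preimage (continuous_apply m)
    rw [hc.isNowhereDense_iff]
    by_contra h
    obtain ⟨x, hx⟩ := Set.nonempty_iff_ne_empty.2 h
    have hmem : _ ∈ nhds x := mem_interior_iff_mem_nhds.1 hx
    obtain ⟨m0, hm0⟩ := cylinder_subset_of_mem_nhds hmem
    have hz : (fun k => if k = max m0 N then !b else x k) ∈
        {x : ℕ → Bool | ∀ m, N ≤ m → x m = b} := by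
      refine hm0 _ (fun k hk => ?_)
      have : k ≠ max m0 N := by have := le_max_left m0 N; omega
      simp [this]
    have := hz (max m0 N) (le_max_right m0 N)
    simp at this
  · intro x hx
    obtain ⟨N, hN⟩ := eventually_atTop.1 hx
    exact ⟨_, ⟨N, rfl⟩, hN⟩


lemma avoid_step (G : Set (ℕ → Bool)) (hGc : IsClosed G) (hGi : interior G = ∅)
    (c : ℕ → Bool) (p : ℕ) :
    ∃ q, p < q ∧ ∃ t : ℕ → Bool, (∀ k, k < p → t k = c k) ∧
      ∀ x : ℕ → Bool, (∀ k, k < q → x k = t k) → x ∉ G := by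
  have hdense : Dense Gᶜ := interior_eq_empty_iff_dense_compl.1 hGi
  have hCopen : IsOpen {x : ℕ → Bool | ∀ k < p, x k = c k} := by
    have h : {x : ℕ → Bool | ∀ k < p, x k = c k} =
        ⋂ k ∈ Finset.range p, (fun x : ℕ → Bool => x k) ⁻¹' {c k} := by
      ext x; simp
    rw [h]
    exact isOpen_biInter_finset fun k _ => (isOpen_discrete _).preimage (continuous_apply k)
  obtain ⟨z, hzC, hzG⟩ := hdense.inter_open_nonempty _ hCopen ⟨c, fun k _ => rfl⟩
  obtain ⟨m, hm⟩ := cylinder_subset_of_mem_nhds (hGc.isOpen_compl.mem_nhds hzG)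
  refine ⟨max (p+1) m, by omega, z, fun k hk => hzC k hk, fun x hx => ?_⟩
  exact hm x (fun k hk => hx k (by omega))

lemma avoid_all (G : Set (ℕ → Bool)) (hGc : IsClosed G) (hGi : interior G = ∅) (p : ℕ) :
    ∃ q, p < q ∧ ∃ t : ℕ → Bool,
      ∀ x : ℕ → Bool, (∀ k, p ≤ k → k < q → x k = t k) → x ∉ G := by
  have key : ∀ s : Finset (Fin p → Bool), ∃ q, p < q ∧ ∃ t : ℕ → Bool,
      ∀ σ ∈ s, ∀ x : ℕ → Bool, (∀ i : Fin p, x i = σ i) →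
        (∀ k, p ≤ k → k < q → x k = t k) → x ∉ G := by
    intro s
    induction s using Finset.induction_on with
    | empty => exact ⟨p+1, by omega, fun _ => false, by simp⟩
    | @insert σ s _ ih =>
      obtain ⟨q, hpq, t, ht⟩ := ih
      obtain ⟨q', hqq', t', ht'c, ht'⟩ :=
        avoid_step G hGc hGi (fun k => if h : k < p then σ ⟨k, h⟩ else t k) q
      refine ⟨q', by omega, t', ?_⟩
      intro σ' hσ' x hx1 hx2
      rcases Finset.mem_insert.1 hσ' with rfl | hmem
      · refine ht' x ?_
        intro k hk
        by_cases hkp : k < p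
        · rw [hx1 ⟨k, hkp⟩, ht'c k (by omega)]
          simp [hkp]
        · by_cases hkq : k < q
          · exact hx2 k (by omega) (by omega)
          · exact hx2 k (by omega) hk
      · refine ht σ' hmem x hx1 ?_
        intro k hpk hkq
        rw [hx2 k hpk (by omega), ht'c k (by omega)]
        simp [Nat.not_lt.2 hpk]
  obtain ⟨q, hpq, t, ht⟩ := key Finset.univ
  exact ⟨q, hpq, t, fun x hx =>
    ht (fun i => x i) (Finset.mem_univ _) x (fun i => rfl) hx⟩


noncomputable def chainSt (G : ℕ → Set (ℕ → Bool)) (hGc : ∀ n, IsClosed (G n))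
    (hGi : ∀ n, interior (G n) = ∅) : ℕ → ℕ × (ℕ → Bool)
  | 0 => (0, fun _ => false)
  | n+1 =>
    let prev := chainSt G hGc hGi n
    let h := avoid_all (G n) (hGc n) (hGi n) prev.1
    (h.choose, fun k => if k < prev.1 then prev.2 k else h.choose_spec.2.choose k)

variable {G : ℕ → Set (ℕ → Bool)} {hGc : ∀ n, IsClosed (G n)} {hGi : ∀ n, interior (G n) = ∅}

lemma chainSt_fst_lt (n : ℕ) :
    (chainSt G hGc hGi n).1 < (chainSt G hGc hGi (n+1)).1 := by
  rw [chainSt]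
  exact (avoid_all (G n) (hGc n) (hGi n) (chainSt G hGc hGi n).1).choose_spec.1

lemma chainSt_snd_lo (n k : ℕ) (hk : k < (chainSt G hGc hGi n).1) :
    (chainSt G hGc hGi (n+1)).2 k = (chainSt G hGc hGi n).2 k := by
  rw [chainSt]
  simp only [hk, if_pos]

lemma chainSt_avoid (n : ℕ) (x : ℕ → Bool)
    (hx : ∀ k, (chainSt G hGc hGi n).1 ≤ k → k < (chainSt G hGc hGi (n+1)).1 →
      x k = (chainSt G hGc hGi (n+1)).2 k) :
    x ∉ G n := by
  have hs := (avoid_all (G n) (hGc n) (hGi n) (chainSt G hGc hGi n).1).choose_spec.2.choose_spec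
  refine hs x ?_
  intro k h1 h2
  have h2' : k < (chainSt G hGc hGi (n+1)).1 := by
    rw [chainSt]; exact h2
  have := hx k h1 h2'
  rw [this]
  rw [chainSt]
  simp [Nat.not_lt.2 h1]

lemma chainSt_strictMono : StrictMono (fun n => (chainSt G hGc hGi n).1) :=
  strictMono_nat_of_lt_succ chainSt_fst_lt

lemma chainSt_stable (a b k : ℕ) (hk : k < (chainSt G hGc hGi a).1) (hab : a ≤ b) :
    (chainSt G hGc hGi b).2 k = (chainSt G hGc hGi a).2 k := by
  induction b, hab using Nat.le_induction with
  | base => rfl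
  | succ b hab ih =>
    rw [chainSt_snd_lo b k (lt_of_lt_of_le hk ((chainSt_strictMono (G:=G) (hGc:=hGc) (hGi:=hGi)).monotone hab)), ih]

lemma factA {M : Set (ℕ → Bool)} (hM : IsMeagre M) :
    ∃ E : ℕ → ℕ, StrictMono E ∧ ∃ y : ℕ → Bool, M ⊆ Mset E y := by
  rw [isMeagre_iff_countable_union_isNowhereDense] at hM
  obtain ⟨S, hSnd, hScnt, hSsub⟩ := hM
  obtain ⟨f, hf⟩ := (hScnt.insert ∅).exists_eq_range ⟨∅, Set.mem_insert _ _⟩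
  have hfnd : ∀ n, IsNowhereDense (f n) := by
    intro n
    have h : f n ∈ insert ∅ S := hf ▸ Set.mem_range_self n
    rcases Set.mem_insert_iff.1 h with h' | h'
    · rw [h']; exact isNowhereDense_empty
    · exact hSnd _ h'
  -- interior of finite unions of closures is empty
  have hint : ∀ s : Finset ℕ, interior (⋃ k ∈ s, closure (f k)) = ∅ := by
    intro s
    induction s using Finset.induction_on with
    | empty => simp
    | @insert a s _ ih =>
      rw [Finset.set_biUnion_insert]
      rw [interior_eq_empty_iff_dense_compl] at ih ⊢
      rw [Set.compl_union]
      have h1 : Dense (closure (f a))ᶜ := by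
        rw [← interior_eq_empty_iff_dense_compl]
        exact hfnd a
      have h2 : IsOpen (closure (f a))ᶜ := isClosed_closure.isOpen_compl
      exact h1.inter_of_isOpen_left ih h2
  set G : ℕ → Set (ℕ → Bool) := fun n => ⋃ k ∈ Finset.range (n+1), closure (f k) with hG
  have hGc : ∀ n, IsClosed (G n) := fun n =>
    Set.Finite.isClosed_biUnion (Finset.finite_toSet _) (fun k _ => isClosed_closure)
  have hGi : ∀ n, interior (G n) = ∅ := fun n => hint _
  set E : ℕ → ℕ := fun n => (chainSt G hGc hGi n).1 with hE
  set y : ℕ → Bool := fun k => (chainSt G hGc hGi (k+1)).2 k with hy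
  have hEsm : StrictMono E := chainSt_strictMono
  have hyag : ∀ n k, k < E (n+1) → y k = (chainSt G hGc hGi (n+1)).2 k := by
    intro n k hk
    have hk2 : k < E (k+1) := lt_of_lt_of_le (Nat.lt_succ_self k) hEsm.le_apply
    rcases le_total (k+1) (n+1) with h | h
    · rw [hy]; exact (chainSt_stable (k+1) (n+1) k hk2 h).symm
    · rw [hy]; exact chainSt_stable (n+1) (k+1) k hk h
  refine ⟨E, hEsm, y, ?_⟩
  intro x hx
  obtain ⟨s, hsS, hxs⟩ := hSsub hx
  have hs' : s ∈ insert ∅ S := Set.mem_insert_of_mem _ hsS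
  rw [hf] at hs'
  obtain ⟨j, hj⟩ := hs'
  refine eventually_atTop.2 ⟨j, fun n hn => ?_⟩
  by_contra hcon
  push_neg at hcon
  have hxG : x ∉ G n := by
    refine chainSt_avoid (hGc:=hGc) (hGi:=hGi) n x (fun k h1 h2 => ?_)
    rw [hcon k h1 h2]
    exact hyag n k h2
  refine hxG ?_
  have hjmem : j ∈ Finset.range (n+1) := Finset.mem_range.2 (by omega)
  have hxcl : x ∈ closure (f j) := hj ▸ subset_closure hxs
  exact Set.mem_biUnion hjmem hxcl


def Efun (f : ℕ → ℕ) : ℕ → ℕ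
  | 0 => 0
  | n+1 => Efun f n + f (Efun f n) + 1

lemma Efun_succ (f : ℕ → ℕ) (n : ℕ) : Efun f (n+1) = Efun f n + f (Efun f n) + 1 := rfl

lemma Efun_strictMono (f : ℕ → ℕ) : StrictMono (Efun f) :=
  strictMono_nat_of_lt_succ (fun n => by rw [Efun_succ]; omega)

lemma mem_Mset_of_hits (f : ℕ → ℕ) (x : ℕ → Bool) (b : Bool) (N : ℕ)
    (H : ∀ k, N ≤ k → ∃ m, k < m ∧ m ≤ k + f k ∧ x m ≠ b) :
    x ∈ Mset (Efun f) (fun _ => b) := by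
  refine eventually_atTop.2 ⟨N, fun n hn => ?_⟩
  have hk : N ≤ Efun f n := le_trans hn (Efun_strictMono f).le_apply
  obtain ⟨m, h1, h2, h3⟩ := H _ hk
  exact ⟨m, le_of_lt h1, by rw [Efun_succ]; omega, h3⟩

def maj (f : ℕ → ℕ) : ℕ → ℕ := fun k => (Finset.range (k+1)).sup f

lemma maj_monotone (f : ℕ → ℕ) : Monotone (maj f) :=
  fun a b hab => Finset.sup_mono (Finset.range_subset_range.2 (by omega))

lemma le_maj (f : ℕ → ℕ) (k : ℕ) : f k ≤ maj f k :=
  Finset.le_sup (Finset.self_mem_range_succ k)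

open Classical in
noncomputable def firstHit (x : ℕ → Bool) (b : Bool) (k : ℕ) : ℕ :=
  if h : ∃ m, k < m ∧ x m = b then h.choose else 0

lemma firstHit_spec {x : ℕ → Bool} {b : Bool} {k : ℕ} (h : ∃ m, k < m ∧ x m = b) :
    k < firstHit x b k ∧ x (firstHit x b k) = b := by
  classical
  rw [firstHit, dif_pos h]
  exact h.choose_spec

lemma factB {f : ℕ → ℕ} (hf : Monotone f) {E : ℕ → ℕ} (hE : StrictMono E) (y : ℕ → Bool)
    (hsub : Mset (Efun f) (fun _ => false) ⊆ Mset E y) :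
    ∀ᶠ k in atTop, f k < E (k+2) := by
  classical
  have hgood : ∀ᶠ n in atTop, ∃ m, E n ≤ Efun f m ∧ Efun f (m+1) ≤ E (n+1) := by
    by_contra hcon
    rw [Filter.not_eventually] at hcon
    have hex : ∀ j : ℕ, ∃ n, j < n ∧ ¬ ∃ m, E n ≤ Efun f m ∧ Efun f (m+1) ≤ E (n+1) := by
      intro j
      obtain ⟨n, hn1, hn2⟩ := (frequently_atTop'.1 hcon) j
      exact ⟨n, hn1, hn2⟩
    choose g hg1 hg2 using hex
    set seq : ℕ → ℕ := fun j => Nat.rec (g 0) (fun _ prev => g (prev + 1)) j with hseq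
    have hseqS : ∀ j, seq (j+1) = g (seq j + 1) := fun j => rfl
    have hgap : ∀ j, seq j + 1 < seq (j+1) := fun j => by rw [hseqS]; exact hg1 _
    have hbad : ∀ j, ¬ ∃ m, E (seq j) ≤ Efun f m ∧ Efun f (m+1) ≤ E (seq j + 1) := by
      intro j
      cases j with
      | zero => exact hg2 0
      | succ j => rw [hseqS]; exact hg2 _
    have hsm : StrictMono seq := strictMono_nat_of_lt_succ (fun j => by have := hgap j; omega)
    have hgap2 : ∀ i j, i < j → seq i + 1 < seq j := by
      intro i j hij
      have h1 : seq (i+1) ≤ seq j := hsm.monotone hij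
      have := hgap i
      omega
    set x : ℕ → Bool :=
      fun k => if h : ∃ j, E (seq j) ≤ k ∧ k < E (seq j + 1) then y k else true with hx
    have hxsel : ∀ k j, E (seq j) ≤ k → k < E (seq j + 1) → x k = y k := by
      intro k j h1 h2
      rw [hx]
      exact dif_pos ⟨j, h1, h2⟩
    have hxtrue : ∀ k, (¬ ∃ j, E (seq j) ≤ k ∧ k < E (seq j + 1)) → x k = true := by
      intro k h
      rw [hx]
      exact dif_neg h
    have hxL : x ∈ Mset (Efun f) (fun _ => false) := by
      refine eventually_atTop.2 ⟨0, fun n _ => ?_⟩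
      by_contra hcon2
      push_neg at hcon2
      have hsel : ∀ k, Efun f n ≤ k → k < Efun f (n+1) →
          ∃ j, E (seq j) ≤ k ∧ k < E (seq j + 1) := by
        intro k h1 h2
        by_contra hns
        have h3 := hxtrue k hns
        have h4 := hcon2 k h1 h2
        rw [h3] at h4
        simp at h4
      have hJne : Efun f n < Efun f (n+1) := Efun_strictMono f (Nat.lt_succ_self n)
      obtain ⟨j0, hj01, hj02⟩ := hsel (Efun f n) le_rfl hJne
      have hall : ∀ k, Efun f n ≤ k → (k < Efun f (n+1) → k < E (seq j0 + 1)) := by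
        intro k hk
        induction k, hk using Nat.le_induction with
        | base => intro _; exact hj02
        | succ k hk ih =>
          intro hlt
          have hkJ : k < Efun f (n+1) := by omega
          have hkE : k < E (seq j0 + 1) := ih hkJ
          by_contra hge
          have heq : k + 1 = E (seq j0 + 1) := by omega
          obtain ⟨j', h1', h2'⟩ := hsel (k+1) (by omega) hlt
          rcases lt_trichotomy (seq j') (seq j0) with h | h | h
          · have hj : j' < j0 := hsm.lt_iff_lt.1 h
            have hg := hgap2 j' j0 hj
            have hE1 : E (seq j' + 1) ≤ E (seq j0) := hE.monotone (by omega)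
            omega
          · rw [h] at h2'; omega
          · have hj : j0 < j' := hsm.lt_iff_lt.1 h
            have hg := hgap2 j0 j' hj
            have hE2 : E (seq j0 + 1) < E (seq j') := hE (by omega)
            omega
      refine hbad j0 ⟨n, hj01, ?_⟩
      have h5 := hall (Efun f (n+1) - 1) (by omega) (by omega)
      omega
    have hxR : x ∉ Mset E y := by
      intro hmem
      obtain ⟨N, hN⟩ := eventually_atTop.1 hmem
      obtain ⟨k, h1, h2, h3⟩ := hN (seq N) hsm.le_apply
      exact h3 (hxsel k N h1 h2)
    exact hxR (hsub hxL)
  obtain ⟨N, hN⟩ := eventually_atTop.1 hgood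
  refine eventually_atTop.2 ⟨N, fun k hk => ?_⟩
  obtain ⟨m, h1, h2⟩ := hN (k+1) (by omega)
  have h2' : Efun f (m+1) ≤ E (k+2) := h2
  have hfm : f (Efun f m) < E (k+2) := by
    have h3 := Efun_succ f m
    omega
  have hkm : k ≤ Efun f m := by
    have h4 : k + 1 ≤ E (k+1) := hE.le_apply
    omega
  exact lt_of_le_of_lt (hf hkm) hfm

end CantorAux

/-- `add(𝓑) ≤ 𝔟 ≤ non(𝓑)` and `cov(𝓑) ≤ 𝔡 ≤ cof(𝓑)`. -/
theorem category_vs_bounding_dominating :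
    (addIdeal meagerIdeal ≤ frakB ∧ frakB ≤ nonIdeal meagerIdeal) ∧
    (covIdeal meagerIdeal ≤ frakD ∧ frakD ≤ cofIdeal meagerIdeal) := by
  classical
  have huniv : (Set.univ : Set (ℕ → Bool)) ∉ meagerIdeal := by
    intro h
    have h2 : (∅ : Set (ℕ → Bool)) ∈ residual (ℕ → Bool) := by
      have h' : IsMeagre (Set.univ : Set (ℕ → Bool)) := h
      rwa [IsMeagre, Set.compl_univ] at h'
    have h4 := dense_of_mem_residual h2 (fun _ => false)
    rw [closure_empty] at h4
    exact h4
  have memMset : ∀ (x : ℕ → Bool) (b : Bool) (f : ℕ → ℕ), {m | x m = b}.Infinite →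
      DominatedBy (firstHit x b) f → x ∈ Mset (Efun f) (fun _ => !b) := by
    intro x b f hinf hdom
    obtain ⟨N, hN⟩ := eventually_atTop.1 hdom
    refine mem_Mset_of_hits f x (!b) N (fun k hk => ?_)
    have hex : ∃ m, k < m ∧ x m = b := by
      obtain ⟨m, hm1, hm2⟩ := hinf.exists_gt k
      exact ⟨m, hm2, hm1⟩
    obtain ⟨h1, h2⟩ := firstHit_spec hex
    refine ⟨firstHit x b k, h1, ?_, ?_⟩
    · have := hN k hk; omega
    · rw [h2]; cases b <;> simp
  have pigeon : ∀ x : ℕ → Bool, ∃ b, {m | x m = b}.Infinite := by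
    intro x
    by_contra h
    push_neg at h
    have hfin := (h true).union (h false)
    have he : {m | x m = true} ∪ {m | x m = false} = Set.univ := by
      ext m
      simp only [Set.mem_union, Set.mem_setOf_eq, Set.mem_univ, iff_true]
      cases hx : x m
      · exact Or.inr rfl
      · exact Or.inl rfl
    rw [he] at hfin
    exact Set.infinite_univ hfin
  refine ⟨⟨?_, ?_⟩, ?_, ?_⟩
  · -- add ≤ 𝔟
    have hBne : Set.Nonempty
        {c | ∃ B : Set (ℕ → ℕ), (∀ f, ∃ g ∈ B, ¬ DominatedBy g f) ∧ Cardinal.mk B = c} := by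
      refine ⟨_, Set.univ, fun f => ⟨f, Set.mem_univ f, ?_⟩, rfl⟩
      intro hd
      obtain ⟨N, hN⟩ := eventually_atTop.1 hd
      exact absurd (hN N le_rfl) (lt_irrefl _)
    obtain ⟨B, hBunb, hBmk⟩ : ∃ B : Set (ℕ → ℕ),
        (∀ f, ∃ g ∈ B, ¬ DominatedBy g f) ∧ Cardinal.mk B = frakB := csInf_mem hBne
    set A₁ := (fun f : ℕ → ℕ => Mset (Efun (maj f)) (fun _ => false)) '' B with hA₁
    have hA₁I : A₁ ⊆ meagerIdeal := by
      rintro t ⟨f, _, rfl⟩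
      exact isMeagre_Mset (Efun_strictMono _) _
    have hA₁U : ⋃₀ A₁ ∉ meagerIdeal := by
      intro hmeag
      obtain ⟨E, hEsm, y, hsub⟩ := factA hmeag
      obtain ⟨f, hfB, hfnd⟩ := hBunb (fun k => E (k+2))
      apply hfnd
      have h1 : Mset (Efun (maj f)) (fun _ => false) ⊆ Mset E y :=
        (Set.subset_sUnion_of_mem (Set.mem_image_of_mem _ hfB)).trans hsub
      have h2 := factB (maj_monotone f) hEsm y h1
      exact h2.mono fun k hk => lt_of_le_of_lt (le_maj f k) hk
    calc addIdeal meagerIdeal ≤ Cardinal.mk A₁ := csInf_le' ⟨A₁, hA₁I, hA₁U, rfl⟩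
      _ ≤ Cardinal.mk B := Cardinal.mk_image_le
      _ = frakB := hBmk
  · -- 𝔟 ≤ non
    have hNne : Set.Nonempty
        {c | ∃ A : Set (ℕ → Bool), A ∉ meagerIdeal ∧ Cardinal.mk A = c} :=
      ⟨_, Set.univ, huniv, rfl⟩
    obtain ⟨A, hAnm, hAmk⟩ : ∃ A : Set (ℕ → Bool),
        A ∉ meagerIdeal ∧ Cardinal.mk A = nonIdeal meagerIdeal := csInf_mem hNne
    set U := (fun x : ℕ → Bool => firstHit x true) '' A with hU
    have hUunb : ∀ f, ∃ g ∈ U, ¬ DominatedBy g f := by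
      by_contra hcon
      push_neg at hcon
      obtain ⟨f, hf⟩ := hcon
      apply hAnm
      have hsub : A ⊆ Mset (Efun f) (fun _ => !true) ∪
          {z : ℕ → Bool | ∀ᶠ m in atTop, z m = false} := by
        intro x hx
        by_cases hinf : {m | x m = true}.Infinite
        · exact Or.inl (memMset x true f hinf (hf _ (Set.mem_image_of_mem _ hx)))
        · right
          rw [Set.not_infinite] at hinf
          obtain ⟨N, hN⟩ := hinf.bddAbove
          refine eventually_atTop.2 ⟨N+1, fun m hm => ?_⟩
          by_contra hc
          have hxm : x m = true := by
            cases h : x m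
            · exact absurd h hc
            · rfl
          have := hN hxm
          omega
      exact IsMeagre.mono hsub
        (isMeagre_union (isMeagre_Mset (Efun_strictMono f) _) (isMeagre_evtConst false))
    calc frakB ≤ Cardinal.mk U := csInf_le' ⟨U, hUunb, rfl⟩
      _ ≤ Cardinal.mk A := Cardinal.mk_image_le
      _ = nonIdeal meagerIdeal := hAmk
  · -- cov ≤ 𝔡
    have hDne : Set.Nonempty
        {c | ∃ D : Set (ℕ → ℕ), (∀ g, ∃ f ∈ D, DominatedBy g f) ∧ Cardinal.mk D = c} := by
      refine ⟨_, Set.univ, fun g => ⟨g + 1, Set.mem_univ _, ?_⟩, rfl⟩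
      exact Filter.Eventually.of_forall (fun n => Nat.lt_succ_self (g n))
    obtain ⟨D, hDdom, hDmk⟩ : ∃ D : Set (ℕ → ℕ),
        (∀ g, ∃ f ∈ D, DominatedBy g f) ∧ Cardinal.mk D = frakD := csInf_mem hDne
    have hDinf : D.Infinite := by
      by_contra hfin
      rw [Set.not_infinite] at hfin
      obtain ⟨f, hfD, hdom⟩ := hDdom (fun n => (hfin.toFinset.sup fun f => f n) + 1)
      obtain ⟨N, hN⟩ := eventually_atTop.1 hdom
      have h1 : (hfin.toFinset.sup fun f => f N) + 1 < f N := hN N le_rfl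
      have h2 : f N ≤ hfin.toFinset.sup (fun f => f N) :=
        Finset.le_sup (f := fun f => f N) (hfin.mem_toFinset.2 hfD)
      exact absurd (lt_trans (Nat.lt_succ_of_le h2) h1) (lt_irrefl _)
    have hDcard : Cardinal.aleph0 ≤ Cardinal.mk D :=
      Cardinal.infinite_iff.1 (Set.infinite_coe_iff.2 hDinf)
    set A := ((fun f => Mset (Efun f) (fun _ => false)) '' D) ∪
        ((fun f => Mset (Efun f) (fun _ => true)) '' D) with hA
    have hAI : A ⊆ meagerIdeal := by
      rintro t (⟨f, _, rfl⟩ | ⟨f, _, rfl⟩) <;> exact isMeagre_Mset (Efun_strictMono f) _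
    have hAU : ⋃₀ A = Set.univ := by
      rw [Set.eq_univ_iff_forall]
      intro x
      obtain ⟨b, hb⟩ := pigeon x
      obtain ⟨f, hfD, hdom⟩ := hDdom (firstHit x b)
      have hx := memMset x b f hb hdom
      cases b
      · exact ⟨_, Or.inr (Set.mem_image_of_mem _ hfD), hx⟩
      · exact ⟨_, Or.inl (Set.mem_image_of_mem _ hfD), hx⟩
    calc covIdeal meagerIdeal ≤ Cardinal.mk A := csInf_le' ⟨A, hAI, hAU, rfl⟩
      _ ≤ Cardinal.mk _ + Cardinal.mk _ := Cardinal.mk_union_le _ _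
      _ ≤ Cardinal.mk D + Cardinal.mk D := add_le_add Cardinal.mk_image_le Cardinal.mk_image_le
      _ = Cardinal.mk D := Cardinal.add_eq_self hDcard
      _ = frakD := hDmk
  · -- 𝔡 ≤ cof
    have hCne : Set.Nonempty
        {c | ∃ A ⊆ meagerIdeal, (∀ B ∈ meagerIdeal, ∃ C ∈ A, B ⊆ C) ∧ Cardinal.mk A = c} :=
      ⟨_, meagerIdeal, subset_rfl, fun B hB => ⟨B, hB, subset_rfl⟩, rfl⟩
    obtain ⟨C, hCI, hCcof, hCmk⟩ : ∃ A ⊆ meagerIdeal,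
        (∀ B ∈ meagerIdeal, ∃ C ∈ A, B ⊆ C) ∧ Cardinal.mk A = cofIdeal meagerIdeal :=
      csInf_mem hCne
    have hch : ∀ B : ↥C, ∃ E : ℕ → ℕ, StrictMono E ∧ ∃ y, (B : Set (ℕ → Bool)) ⊆ Mset E y :=
      fun B => factA (hCI B.2)
    choose Ef hEsm yf hEsub using hch
    set U := Set.range (fun B : ↥C => (fun k => Ef B (k+2))) with hU
    have hUdom : ∀ g, ∃ h ∈ U, DominatedBy g h := by
      intro g
      have hmeag : Mset (Efun (maj g)) (fun _ => false) ∈ meagerIdeal :=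
        isMeagre_Mset (Efun_strictMono _) _
      obtain ⟨B, hBC, hBsub⟩ := hCcof _ hmeag
      refine ⟨_, ⟨⟨B, hBC⟩, rfl⟩, ?_⟩
      have h2 := factB (maj_monotone g) (hEsm ⟨B, hBC⟩) (yf ⟨B, hBC⟩)
        (hBsub.trans (hEsub ⟨B, hBC⟩))
      exact h2.mono fun k hk => lt_of_le_of_lt (le_maj g k) hk
    calc frakD ≤ Cardinal.mk U := csInf_le' ⟨U, hUdom, rfl⟩
      _ ≤ Cardinal.mk (↥C) := Cardinal.mk_range_le
      _ = cofIdeal meagerIdeal := hCmk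
end

section
/- cov(𝓑) ≤ non(𝓛) and cov(𝓛) ≤ non(𝓑). -/
open Filter

namespace RothAux


abbrev X := ℕ → Bool

def tr (a x : X) : X := fun n => xor (a n) (x n)

lemma tr_tr (a x : X) : tr a (tr a x) = x := funext fun n => by simp [tr]

lemma tr_comm (a x : X) : tr a x = tr x a := funext fun n => by simp [tr, Bool.xor_comm]

lemma mem_tr_image {a x : X} {s : Set X} : x ∈ tr a '' s ↔ tr a x ∈ s := by
  constructor
  · rintro ⟨y, hy, rfl⟩; rwa [tr_tr]
  · intro h; exact ⟨tr a x, h, tr_tr a x⟩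

def trHomeo (a : X) : X ≃ₜ X where
  toFun := tr a
  invFun := tr a
  left_inv := tr_tr a
  right_inv := tr_tr a
  continuous_toFun := by unfold tr; continuity
  continuous_invFun := by unfold tr; continuity

lemma isNowhereDense_tr_image (a : X) {s : Set X} (h : IsNowhereDense s) :
    IsNowhereDense (tr a '' s) := by
  have : tr a '' s = trHomeo a '' s := rfl
  rw [IsNowhereDense, this, ← (trHomeo a).image_closure, ← (trHomeo a).image_interior, h,
    Set.image_empty]

lemma isMeagre_tr_image (a : X) {s : Set X} (h : IsMeagre s) : IsMeagre (tr a '' s) := by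
  rw [isMeagre_iff_countable_union_isNowhereDense] at h ⊢
  obtain ⟨S, hND, hc, hsub⟩ := h
  refine ⟨(Set.image (tr a)) '' S, ?_, hc.image _, ?_⟩
  · rintro t ⟨u, hu, rfl⟩; exact isNowhereDense_tr_image a (hND u hu)
  · rintro y ⟨x, hx, rfl⟩
    obtain ⟨u, hu, hxu⟩ := hsub hx
    exact ⟨tr a '' u, ⟨u, hu, rfl⟩, ⟨x, hxu, rfl⟩⟩

lemma null_mono {A B : Set X} (h : A ⊆ B) (hB : IsNullCantor B) : IsNullCantor A :=
  fun ε hε => by obtain ⟨F, v, h1, h2⟩ := hB ε hε; exact ⟨F, v, h.trans h1, h2⟩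

lemma null_tr_image (a : X) {A : Set X} (h : IsNullCantor A) : IsNullCantor (tr a '' A) := by
  intro ε hε
  obtain ⟨F, v, h1, h2⟩ := h ε hε
  refine ⟨F, fun k => tr a (v k), ?_, h2⟩
  rintro _ ⟨x, hx, rfl⟩
  obtain ⟨k, hk⟩ := Set.mem_iUnion.mp (h1 hx)
  exact Set.mem_iUnion.mpr ⟨k, fun n hn => by simp only [tr, hk n hn]⟩

/-! ### a comeager null set -/

def Zset (k : ℕ) : Set X := Cyl (Finset.Ico (2^k) (2^k + k)) (fun _ => false)

lemma Zset_open (k : ℕ) : IsOpen (Zset k) := by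
  have : Zset k = ⋂ i ∈ Finset.Ico (2^k) (2^k + k), (fun x : X => x i) ⁻¹' {false} := by
    ext x; simp [Zset, Cyl]
  rw [this]
  exact isOpen_biInter_finset fun i _ => (continuous_apply i).isOpen_preimage _ (isOpen_discrete _)

def Nset (n : ℕ) : Set X := ⋃ k, Zset (n + k)

lemma Nset_dense (n : ℕ) : Dense (Nset n) := by
  rw [dense_iff_inter_open]
  rintro U hU ⟨x, hx⟩
  obtain ⟨I, u, h1, h2⟩ := isOpen_pi_iff.mp hU x hx
  set m := n + (I.sup id + 1) with hm
  refine ⟨fun i => if i ∈ Finset.Ico (2^m) (2^m + m) then false else x i, ?_, ?_⟩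
  · apply h2
    intro i hi
    have him : i < 2 ^ m := lt_of_le_of_lt (Finset.le_sup (f := id) hi)
      (lt_of_lt_of_le (Nat.lt_succ_self _) (le_trans (by omega) (Nat.le_of_lt (Nat.lt_two_pow_self (n := m)))))
    show (if i ∈ Finset.Ico (2^m) (2^m + m) then false else x i) ∈ u i
    rw [if_neg (by simp only [Finset.mem_Ico, not_and, not_le]; omega)]
    exact (h1 i hi).2
  · refine Set.mem_iUnion.mpr ⟨I.sup id + 1, ?_⟩
    intro i hi
    show (if i ∈ Finset.Ico (2^(n + (I.sup id + 1))) (2^(n + (I.sup id + 1)) + (n + (I.sup id + 1))) then false else x i) = false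
    rw [if_pos hi]

def Gset : Set X := ⋂ n, Nset n

lemma Gset_residual : Gset ∈ residual X :=
  countable_iInter_mem.mpr fun n => residual_of_dense_open (isOpen_iUnion fun _ => Zset_open _) (Nset_dense n)

lemma Gset_compl_meagre : IsMeagre Gsetᶜ := by
  rw [IsMeagre, compl_compl]; exact Gset_residual

lemma Gset_null : IsNullCantor Gset := by
  intro ε hε
  obtain ⟨n, hn⟩ := ENNReal.exists_inv_two_pow_lt (a := ε / 2)
    (by simp [ENNReal.div_eq_top, hε.ne'])
  refine ⟨fun j => Finset.Ico (2^(n+j)) (2^(n+j) + (n+j)), fun _ _ => false, ?_, ?_⟩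
  · intro x hx
    obtain ⟨j, hj⟩ := Set.mem_iUnion.mp (Set.mem_iInter.mp hx n)
    exact Set.mem_iUnion.mpr ⟨j, hj⟩
  · have hcard : ∀ j, (Finset.Ico (2^(n+j)) (2^(n+j) + (n+j))).card = n + j := by
      intro j; rw [Nat.card_Ico]; omega
    calc (∑' j, (2 : ENNReal)⁻¹ ^ (Finset.Ico (2^(n+j)) (2^(n+j) + (n+j))).card)
        = ∑' j, (2 : ENNReal)⁻¹ ^ n * (2 : ENNReal)⁻¹ ^ j := by
          refine tsum_congr fun j => ?_; rw [hcard j, pow_add]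
      _ = (2 : ENNReal)⁻¹ ^ n * (1 - 2⁻¹)⁻¹ := by
          rw [ENNReal.tsum_mul_left, ENNReal.tsum_geometric]
      _ = (2 : ENNReal)⁻¹ ^ n * 2 := by norm_num
      _ ≤ ε / 2 * 2 := mul_le_mul_left hn.le 2
      _ = ε := ENNReal.div_mul_cancel (by norm_num) (by norm_num)




open Classical in
noncomputable def W (F : ℕ → Finset ℕ) (v : ℕ → ℕ → Bool) (σ : X) (n : ℕ) : ENNReal :=
  ∑' k, if ∀ i ∈ F k ∩ Finset.range n, σ i = v k i
    then (2:ENNReal)⁻¹ ^ ((F k) \ Finset.range n).card else 0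

variable {F : ℕ → Finset ℕ} {v : ℕ → ℕ → Bool}

lemma W_congr {σ τ : X} (n : ℕ) (h : ∀ i < n, σ i = τ i) : W F v σ n = W F v τ n := by
  unfold W
  refine tsum_congr fun k => ?_
  congr 1
  refine propext (forall₂_congr fun i hi => ?_)
  have : i < n := Finset.mem_range.mp (Finset.mem_inter.mp hi).2
  rw [h i this]

lemma W_zero (σ : X) : W F v σ 0 = ∑' k, (2:ENNReal)⁻¹ ^ (F k).card := by
  unfold W
  refine tsum_congr fun k => ?_
  rw [if_pos, Finset.range_zero, Finset.sdiff_empty]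
  simp

lemma cond_update_iff (σ : X) (n k : ℕ) (b : Bool) :
    (∀ i ∈ F k ∩ Finset.range (n+1), Function.update σ n b i = v k i) ↔
      ((∀ i ∈ F k ∩ Finset.range n, σ i = v k i) ∧ (n ∈ F k → b = v k n)) := by
  constructor
  · intro h
    refine ⟨fun i hi => ?_, fun hn => ?_⟩
    · obtain ⟨h1, h2⟩ := Finset.mem_inter.mp hi
      have hlt : i < n := Finset.mem_range.mp h2
      have := h i (Finset.mem_inter.mpr ⟨h1, Finset.mem_range.mpr (by omega)⟩)
      rwa [Function.update_of_ne (by omega)] at this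
    · have := h n (Finset.mem_inter.mpr ⟨hn, Finset.mem_range.mpr (by omega)⟩)
      rwa [Function.update_self] at this
  · rintro ⟨h1, h2⟩ i hi
    obtain ⟨hiF, hir⟩ := Finset.mem_inter.mp hi
    have hlt : i < n + 1 := Finset.mem_range.mp hir
    rcases eq_or_ne i n with rfl | hne
    · rw [Function.update_self]; exact h2 hiF
    · rw [Function.update_of_ne hne]
      exact h1 i (Finset.mem_inter.mpr ⟨hiF, Finset.mem_range.mpr (by omega)⟩)

lemma sdiff_succ_of_not_mem {n k : ℕ} (h : n ∉ F k) :
    F k \ Finset.range (n+1) = F k \ Finset.range n := by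
  ext i
  simp only [Finset.mem_sdiff, Finset.mem_range, not_lt]
  constructor
  · rintro ⟨h1, h2⟩; exact ⟨h1, by omega⟩
  · rintro ⟨h1, h2⟩
    have : i ≠ n := fun e => h (e ▸ h1)
    exact ⟨h1, by omega⟩

lemma pow_sdiff_succ {n k : ℕ} (h : n ∈ F k) :
    (2:ENNReal)⁻¹ ^ (F k \ Finset.range n).card
      = 2⁻¹ * (2:ENNReal)⁻¹ ^ (F k \ Finset.range (n+1)).card := by
  have h1 : F k \ Finset.range (n+1) = (F k \ Finset.range n).erase n := by
    ext i
    simp only [Finset.mem_sdiff, Finset.mem_range, not_lt, Finset.mem_erase]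
    constructor
    · rintro ⟨h1, h2⟩; exact ⟨by omega, h1, by omega⟩
    · rintro ⟨h1, h2, h3⟩; exact ⟨h2, by omega⟩
  have hmem : n ∈ F k \ Finset.range n := Finset.mem_sdiff.mpr ⟨h, by simp⟩
  rw [h1, ← pow_succ']
  congr 1
  rw [Finset.card_erase_of_mem hmem]
  have : 1 ≤ (F k \ Finset.range n).card := Finset.card_pos.mpr ⟨n, hmem⟩
  omega

open Classical in
lemma W_step (σ : X) (n : ℕ) :
    W F v (Function.update σ n false) (n+1) + W F v (Function.update σ n true) (n+1)
      ≤ 2 * W F v σ n := by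
  unfold W
  rw [← ENNReal.tsum_add, ← ENNReal.tsum_mul_left]
  refine ENNReal.tsum_le_tsum fun k => ?_
  by_cases hc : ∀ i ∈ F k ∩ Finset.range n, σ i = v k i
  · by_cases hnF : n ∈ F k
    · rw [if_pos hc, pow_sdiff_succ hnF, ← mul_assoc,
        ENNReal.mul_inv_cancel (by norm_num) (by norm_num), one_mul]
      cases hv : v k n
      · rw [if_pos ((cond_update_iff σ n k false).mpr ⟨hc, fun _ => hv.symm⟩),
          if_neg (fun hh => by simpa [hv] using ((cond_update_iff σ n k true).mp hh).2 hnF),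
          add_zero]
      · rw [if_neg (fun hh => by simpa [hv] using ((cond_update_iff σ n k false).mp hh).2 hnF),
          if_pos ((cond_update_iff σ n k true).mpr ⟨hc, fun _ => hv.symm⟩), zero_add]
    · rw [if_pos ((cond_update_iff σ n k false).mpr ⟨hc, fun h => absurd h hnF⟩),
        if_pos ((cond_update_iff σ n k true).mpr ⟨hc, fun h => absurd h hnF⟩),
        if_pos hc, sdiff_succ_of_not_mem hnF, two_mul]
  · rw [if_neg hc, mul_zero,
      if_neg (fun hh => hc ((cond_update_iff σ n k false).mp hh).1),
      if_neg (fun hh => hc ((cond_update_iff σ n k true).mp hh).1), add_zero]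

open Classical in
noncomputable def gseq (F : ℕ → Finset ℕ) (v : ℕ → ℕ → Bool) : ℕ → X
  | 0 => fun _ => false
  | n+1 => Function.update (gseq F v n) n
      (if W F v (Function.update (gseq F v n) n false) (n+1)
          ≤ W F v (Function.update (gseq F v n) n true) (n+1) then false else true)

lemma gseq_le (hS : (∑' k, (2:ENNReal)⁻¹ ^ (F k).card) ≤ 2⁻¹) :
    ∀ n, W F v (gseq F v n) n ≤ 2⁻¹ := by
  intro n
  induction n with
  | zero => rw [W_zero]; exact hS
  | succ n ih =>
    classical
    refine le_trans ?_ ih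
    have hstep := W_step (F := F) (v := v) (gseq F v n) n
    show W F v (Function.update (gseq F v n) n _) (n+1) ≤ _
    split_ifs with h
    · have h2 : 2 * W F v (Function.update (gseq F v n) n false) (n+1)
          ≤ 2 * W F v (gseq F v n) n := by
        rw [two_mul]
        exact le_trans (add_le_add_right h _) hstep
      exact (ENNReal.mul_le_mul_iff_right (by norm_num) (by norm_num)).mp h2
    · have h2 : 2 * W F v (Function.update (gseq F v n) n true) (n+1)
          ≤ 2 * W F v (gseq F v n) n := by
        rw [two_mul]
        exact le_trans (add_le_add_left (le_of_not_ge h) _) hstep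
      exact (ENNReal.mul_le_mul_iff_right (by norm_num) (by norm_num)).mp h2

noncomputable def xfin (F : ℕ → Finset ℕ) (v : ℕ → ℕ → Bool) : X :=
  fun n => gseq F v (n+1) n

lemma gseq_agree : ∀ m i, i < m → gseq F v m i = xfin F v i := by
  intro m
  induction m with
  | zero => omega
  | succ m ih =>
    intro i hi
    rcases eq_or_ne i m with rfl | hne
    · rfl
    · show Function.update (gseq F v m) m _ i = _
      rw [Function.update_of_ne hne]
      exact ih i (by omega)

lemma univ_not_null : ¬ IsNullCantor (Set.univ : Set X) := by
  classical
  intro h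
  obtain ⟨F, v, hcov, hS⟩ := h 2⁻¹ (by norm_num)
  obtain ⟨k, hk⟩ := Set.mem_iUnion.mp (hcov (Set.mem_univ (xfin F v)))
  set n := (F k).sup id + 1 with hn
  have hFk : ∀ i ∈ F k, i < n := fun i hi =>
    Nat.lt_succ_of_le (Finset.le_sup (f := id) hi)
  have hWx : W F v (xfin F v) n ≤ 2⁻¹ := by
    rw [W_congr n (fun i hi => (gseq_agree n i hi).symm)]
    exact gseq_le hS n
  have h1 : (1:ENNReal) ≤ W F v (xfin F v) n := by
    unfold W
    refine le_trans ?_ (ENNReal.le_tsum k)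
    rw [if_pos (fun i hi => hk i (Finset.mem_inter.mp hi).1)]
    have he : F k \ Finset.range n = ∅ := by
      refine Finset.eq_empty_of_forall_notMem fun i hi => ?_
      obtain ⟨ha, hb⟩ := Finset.mem_sdiff.mp hi
      exact hb (Finset.mem_range.mpr (hFk i ha))
    rw [he]
    simp
  have hcontra : (1:ENNReal) ≤ 2⁻¹ := h1.trans hWx
  norm_num at hcontra


lemma univ_not_meagre : ¬ IsMeagre (Set.univ : Set X) := by
  intro h
  rw [IsMeagre, Set.compl_univ] at h
  obtain ⟨x, hx⟩ := (dense_of_mem_residual h).nonempty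
  exact hx

end RothAux

/-- `cov(𝓑) ≤ non(𝓛)` and `cov(𝓛) ≤ non(𝓑)`. -/
theorem cov_le_non_measure_category :
    covIdeal meagerIdeal ≤ nonIdeal nullIdeal ∧
    covIdeal nullIdeal ≤ nonIdeal meagerIdeal := by
  constructor
  · refine le_csInf ⟨Cardinal.mk (Set.univ : Set (ℕ → Bool)), Set.univ,
      RothAux.univ_not_null, rfl⟩ ?_
    rintro c ⟨A, hA, rfl⟩
    refine le_trans (csInf_le' ⟨(fun a => RothAux.tr a '' RothAux.Gsetᶜ) '' A, ?_, ?_, rfl⟩)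
      Cardinal.mk_image_le
    · rintro t ⟨a, _, rfl⟩
      exact RothAux.isMeagre_tr_image a RothAux.Gset_compl_meagre
    · apply Set.eq_univ_of_forall
      intro x
      by_contra hx
      apply hA
      refine RothAux.null_mono (fun a ha => ?_) (RothAux.null_tr_image x RothAux.Gset_null)
      rw [RothAux.mem_tr_image]
      by_contra hga
      exact hx ⟨_, ⟨a, ha, rfl⟩, RothAux.mem_tr_image.mpr
        (by rw [Set.mem_compl_iff, RothAux.tr_comm]; exact hga)⟩
  · refine le_csInf ⟨Cardinal.mk (Set.univ : Set (ℕ → Bool)), Set.univ,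
      RothAux.univ_not_meagre, rfl⟩ ?_
    rintro c ⟨A, hA, rfl⟩
    refine le_trans (csInf_le' ⟨(fun a => RothAux.tr a '' RothAux.Gset) '' A, ?_, ?_, rfl⟩)
      Cardinal.mk_image_le
    · rintro t ⟨a, _, rfl⟩
      exact RothAux.null_tr_image a RothAux.Gset_null
    · apply Set.eq_univ_of_forall
      intro x
      by_contra hx
      apply hA
      refine IsMeagre.mono (hs := RothAux.isMeagre_tr_image x RothAux.Gset_compl_meagre)
        (fun a ha => ?_)
      rw [RothAux.mem_tr_image, Set.mem_compl_iff]
      intro hga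
      exact hx ⟨_, ⟨a, ha, rfl⟩, RothAux.mem_tr_image.mpr
        (by rw [RothAux.tr_comm]; exact hga)⟩
end

section
/- cof(𝓑) = max{non(𝓑), 𝔡} and add(𝓑) = min{cov(𝓑), 𝔟}. -/
open Filter

namespace CofAddAux
open Filter Set

/-- The canonical meager set from a partition `f` and a real `y`. -/
def Mset (f : ℕ → ℕ) (y : ℕ → Bool) : Set (ℕ → Bool) :=
  {x | ∀ᶠ n in atTop, ¬ ∀ i, f n ≤ i → i < f (n+1) → x i = y i}

lemma isOpen_coord (i : ℕ) (b : Bool) : IsOpen {z : ℕ → Bool | z i = b} := by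
  have : {z : ℕ → Bool | z i = b} = (fun z : ℕ → Bool => z i) ⁻¹' {b} := rfl
  rw [this]
  exact (continuous_apply i).isOpen_preimage _ (isOpen_discrete _)

lemma isClosed_coord (i : ℕ) (b : Bool) : IsClosed {z : ℕ → Bool | z i = b} := by
  have : {z : ℕ → Bool | z i = b} = (fun z : ℕ → Bool => z i) ⁻¹' {b} := rfl
  rw [this]
  exact IsClosed.preimage (continuous_apply i) (isClosed_discrete _)

lemma isOpen_cylP (m : ℕ) (y : ℕ → Bool) : IsOpen {z : ℕ → Bool | ∀ i < m, z i = y i} := by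
  have : {z : ℕ → Bool | ∀ i < m, z i = y i} = ⋂ i ∈ Finset.range m, {z : ℕ → Bool | z i = y i} := by
    ext z; simp [Finset.mem_range]
  rw [this]
  exact isOpen_biInter_finset fun i _ => isOpen_coord i (y i)

lemma agree_eq (a b : ℕ) (y : ℕ → Bool) :
    {z : ℕ → Bool | ∀ i, a ≤ i → i < b → z i = y i}
      = ⋂ i ∈ Finset.Ico a b, {z : ℕ → Bool | z i = y i} := by
  ext z
  simp only [mem_iInter, Finset.mem_Ico, mem_setOf_eq]
  constructor
  · intro h i hi; exact h i hi.1 hi.2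
  · intro h i h1 h2; exact h i ⟨h1, h2⟩

lemma isClosed_agree (a b : ℕ) (y : ℕ → Bool) :
    IsClosed {z : ℕ → Bool | ∀ i, a ≤ i → i < b → z i = y i} := by
  rw [agree_eq]
  exact isClosed_biInter fun i _ => isClosed_coord i (y i)

lemma isOpen_agree (a b : ℕ) (y : ℕ → Bool) :
    IsOpen {z : ℕ → Bool | ∀ i, a ≤ i → i < b → z i = y i} := by
  rw [agree_eq]
  exact isOpen_biInter_finset fun i _ => isOpen_coord i (y i)

lemma exists_cyl_subset {U : Set (ℕ → Bool)} (hU : IsOpen U) {x : ℕ → Bool} (hx : x ∈ U) :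
    ∃ m, {z : ℕ → Bool | ∀ i < m, z i = x i} ⊆ U := by
  obtain ⟨I, u, hu, hsub⟩ := isOpen_pi_iff.mp hU x hx
  classical
  rcases I.exists_nat_subset_range with ⟨m, hm⟩
  refine ⟨m, fun z hz => hsub ?_⟩
  intro a ha
  have ham : a < m := by simpa using hm ha
  have : z a = x a := hz a ham
  rw [this]; exact (hu a ha).2

lemma interior_union_empty {Y : Type*} [TopologicalSpace Y] {F G : Set Y} (hF : IsClosed F)
    (hFi : interior F = ∅) (hGi : interior G = ∅) : interior (F ∪ G) = ∅ := by
  have h1 : interior (F ∪ G) \ F ⊆ interior G := by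
    refine interior_maximal ?_ (isOpen_interior.sdiff hF)
    intro x hx
    rcases interior_subset hx.1 with h | h
    · exact absurd h hx.2
    · exact h
  have h2 : interior (F ∪ G) ⊆ F := by
    intro x hx
    by_contra hxF
    exact absurd (h1 ⟨hx, hxF⟩) (by simp [hGi])
  have h3 : interior (F ∪ G) ⊆ interior F := interior_maximal h2 isOpen_interior
  rw [hFi] at h3
  exact eq_empty_iff_forall_notMem.mpr fun x hx => h3 hx

lemma univ_not_meagre : ¬ IsMeagre (univ : Set (ℕ → Bool)) := by
  intro h
  have := dense_of_mem_residual (by simpa [IsMeagre] using h)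
  simpa using this.nonempty

/-- `Mset f y` is meager when `f` is strictly monotone. -/
lemma meagre_Mset {f : ℕ → ℕ} (hf : StrictMono f) (y : ℕ → Bool) : IsMeagre (Mset f y) := by
  set T : ℕ → Set (ℕ → Bool) :=
    fun m => {x | ∀ n, m ≤ n → ¬ ∀ i, f n ≤ i → i < f (n+1) → x i = y i} with hT
  have hclosed : ∀ m, IsClosed (T m) := by
    intro m
    have : T m = ⋂ n ∈ {n | m ≤ n}, {x : ℕ → Bool | ∀ i, f n ≤ i → i < f (n+1) → x i = y i}ᶜ := by
      ext x; simp [hT]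
    rw [this]
    exact isClosed_biInter fun n _ => (isOpen_agree _ _ _).isClosed_compl
  have hint : ∀ m, interior (T m) = ∅ := by
    intro m
    rw [eq_empty_iff_forall_notMem]
    intro x hx
    obtain ⟨m₀, hm₀⟩ := exists_cyl_subset isOpen_interior hx
    set n := max m m₀ with hn
    set z : ℕ → Bool := fun i => if f n ≤ i ∧ i < f (n+1) then y i else x i with hz
    have hzc : z ∈ {w : ℕ → Bool | ∀ i < m₀, w i = x i} := by
      intro i hi
      have hni : ¬ (f n ≤ i ∧ i < f (n+1)) := by
        rintro ⟨h1, _⟩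
        have : m₀ ≤ f n := le_trans (le_max_right m m₀) (hf.le_apply)
        omega
      simp [hz, hni]
    have hzT : z ∈ T m := interior_subset (hm₀ hzc)
    exact hzT n (le_max_left m m₀) fun i h1 h2 => by simp [hz, h1, h2]
  have hsub : Mset f y ⊆ ⋃₀ (range T) := by
    intro x hx
    obtain ⟨m, hm⟩ := eventually_atTop.mp hx
    exact ⟨T m, mem_range_self m, hm⟩
  refine IsMeagre.mono hsub ?_
  rw [isMeagre_iff_countable_union_isNowhereDense]
  refine ⟨range T, ?_, countable_range T, subset_rfl⟩
  rintro t ⟨m, rfl⟩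
  show interior (closure (T m)) = ∅
  rw [(hclosed m).closure_eq]
  exact hint m

/-- Density step: extend any cylinder into the complement of a closed nowhere dense set. -/
lemma exists_kill {F : Set (ℕ → Bool)} (hF : IsClosed F) (hFi : interior F = ∅)
    (m : ℕ) (y : ℕ → Bool) :
    ∃ m' > m, ∃ y' : ℕ → Bool, (∀ i < m, y' i = y i) ∧
      ∀ x : ℕ → Bool, (∀ i < m', x i = y' i) → x ∉ F := by
  have hdense : Dense Fᶜ := interior_eq_empty_iff_dense_compl.mp hFi
  obtain ⟨z, hz1, hz2⟩ :=
    hdense.exists_mem_open (isOpen_cylP m y) ⟨y, fun i _ => rfl⟩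
  obtain ⟨m₂, hm₂⟩ := exists_cyl_subset hF.isOpen_compl hz1
  refine ⟨max m₂ (m+1), by omega, z, fun i hi => hz2 i hi, fun x hx => ?_⟩
  exact hm₂ (fun i hi => hx i (by omega))

/-- Build one block killing a closed nowhere dense set regardless of the past. -/
lemma exists_block {F : Set (ℕ → Bool)} (hF : IsClosed F) (hFi : interior F = ∅) (m : ℕ) :
    ∃ m' > m, ∃ b : ℕ → Bool,
      ∀ x : ℕ → Bool, (∀ i, m ≤ i → i < m' → x i = b i) → x ∉ F := by
  classical
  have aux : ∀ L : List (Fin m → Bool), ∃ m₁ ≥ m, ∃ b : ℕ → Bool,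
      ∀ s ∈ L, ∀ x : ℕ → Bool, (∀ i : ℕ, (h : i < m) → x i = s ⟨i, h⟩) →
        (∀ i, m ≤ i → i < m₁ → x i = b i) → x ∉ F := by
    intro L
    induction L with
    | nil => exact ⟨m, le_rfl, fun _ => true, by simp⟩
    | cons s L ih =>
      obtain ⟨m₁, hm₁, b₁, hb₁⟩ := ih
      set y₀ : ℕ → Bool := fun i => if h : i < m then s ⟨i, h⟩ else b₁ i with hy₀
      obtain ⟨m₂, hm₂, y₂, hy₂agree, hy₂kill⟩ := exists_kill hF hFi m₁ y₀
      set b₂ : ℕ → Bool := fun i => if i < m₁ then b₁ i else y₂ i with hb₂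
      refine ⟨m₂, by omega, b₂, ?_⟩
      intro t ht x hxpre hxblk
      rcases List.mem_cons.mp ht with rfl | htL
      · refine hy₂kill x ?_
        intro i hi
        by_cases h1 : i < m
        · rw [hxpre i h1, hy₂agree i (by omega)]; simp [hy₀, h1]
        · by_cases h2 : i < m₁
          · have hx2 : x i = b₁ i := by
              have h := hxblk i (by omega) (by omega); simp [hb₂, h2] at h; exact h
            rw [hx2, hy₂agree i (by omega)]; simp [hy₀, h1]
          · have h := hxblk i (by omega) (by omega); simp [hb₂, h2] at h; exact h
      · refine hb₁ t htL x hxpre (fun i hi1 hi2 => ?_)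
        have h := hxblk i hi1 (by omega); simp [hb₂, hi2] at h; exact h
  obtain ⟨m₁, hm₁, b, hb⟩ := aux (Finset.univ : Finset (Fin m → Bool)).toList
  refine ⟨m₁ + 1, by omega, b, fun x hx => ?_⟩
  exact hb (fun i : Fin m => x i) (Finset.mem_toList.mpr (Finset.mem_univ _)) x
    (fun i h => rfl) (fun i h1 h2 => hx i h1 (by omega))

/-- Every meager set is covered by an increasing sequence of closed sets with empty interior. -/
lemma exists_closed_seq {A : Set (ℕ → Bool)} (hA : IsMeagre A) :
    ∃ F : ℕ → Set (ℕ → Bool), (∀ n, IsClosed (F n)) ∧ (∀ n, interior (F n) = ∅) ∧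
      (∀ k n, k ≤ n → F k ⊆ F n) ∧ A ⊆ ⋃ n, F n := by
  obtain ⟨S, hS1, hS2, hS3⟩ := isMeagre_iff_countable_union_isNowhereDense.mp hA
  have hins : (insert (∅ : Set (ℕ → Bool)) S).Countable := hS2.insert _
  obtain ⟨φ, hφ⟩ := (Set.countable_iff_exists_surjective (s := insert ∅ S)
    ⟨∅, mem_insert _ _⟩).mp hins
  set g : ℕ → Set (ℕ → Bool) := fun n => closure ((φ n : Set (ℕ → Bool))) with hg
  have hgnwd : ∀ n, interior (g n) = ∅ := by
    intro n
    rcases (φ n).2 with h | h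
    · simp [hg, h]
    · exact hS1 _ h
  set F : ℕ → Set (ℕ → Bool) := fun n => Nat.rec (g 0) (fun k Fk => Fk ∪ g (k+1)) n with hF
  have hFc : ∀ n, IsClosed (F n) := by
    intro n; induction n with
    | zero => exact isClosed_closure
    | succ k ih => exact ih.union isClosed_closure
  have hFi : ∀ n, interior (F n) = ∅ := by
    intro n; induction n with
    | zero => exact hgnwd 0
    | succ k ih => exact interior_union_empty (hFc k) ih (hgnwd (k+1))
  have hmono : ∀ k n, k ≤ n → F k ⊆ F n := by
    intro k n hkn
    induction n with
    | zero => have : k = 0 := by omega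
              subst this; exact subset_rfl
    | succ j ih =>
      rcases Nat.lt_or_ge k (j+1) with h | h
      · exact (ih (by omega)).trans subset_union_left
      · have : k = j + 1 := by omega
        subst this; exact subset_rfl
  refine ⟨F, hFc, hFi, hmono, ?_⟩
  intro x hx
  obtain ⟨t, htS, hxt⟩ := hS3 hx
  obtain ⟨n, hn⟩ := hφ ⟨t, mem_insert_of_mem _ htS⟩
  have hxg : x ∈ g n := by rw [hg]; exact subset_closure (by rw [hn]; exact hxt)
  have hgF : ∀ n, g n ⊆ F n := by
    intro n; cases n with
    | zero => exact subset_rfl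
    | succ k => exact subset_union_right
  exact mem_iUnion.mpr ⟨n, hgF n hxg⟩

/-- Combinatorial characterization: every meager set is inside some `Mset f y`. -/
lemma exists_Mset {A : Set (ℕ → Bool)} (hA : IsMeagre A) :
    ∃ f : ℕ → ℕ, ∃ y : ℕ → Bool, StrictMono f ∧ A ⊆ Mset f y := by
  classical
  obtain ⟨F, hFc, hFi, hFmono, hAF⟩ := exists_closed_seq hA
  have hblk : ∀ n m : ℕ, ∃ m' > m, ∃ b : ℕ → Bool,
      ∀ x : ℕ → Bool, (∀ i, m ≤ i → i < m' → x i = b i) → x ∉ F n :=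
    fun n m => exists_block (hFc n) (hFi n) m
  choose Φ hΦgt B hB using hblk
  set f : ℕ → ℕ := fun n => Nat.rec 0 (fun k fk => Φ k fk) n with hf
  have hfs : ∀ n, f n < f (n+1) := fun n => hΦgt n (f n)
  have hfmono : StrictMono f := strictMono_nat_of_lt_succ hfs
  set u : ℕ → ℕ := fun i => Nat.findGreatest (fun n => f n ≤ i) i with hu
  have hf0 : f 0 = 0 := rfl
  have hu1 : ∀ i, f (u i) ≤ i :=
    fun i => Nat.findGreatest_spec (P := fun n => f n ≤ i) (Nat.zero_le i)
      (by show f 0 ≤ i; rw [hf0]; exact Nat.zero_le i)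
  have hu2 : ∀ i, i < f (u i + 1) := by
    intro i
    by_contra h
    push_neg at h
    have h1 : u i + 1 ≤ i := le_trans (hfmono.le_apply) h
    have h2 : u i + 1 ≤ u i := Nat.le_findGreatest (P := fun n => f n ≤ i) h1 h
    omega
  have huniq : ∀ n i, f n ≤ i → i < f (n+1) → u i = n := by
    intro n i h1 h2
    have ha : u i < n + 1 := hfmono.lt_iff_lt.mp (lt_of_le_of_lt (hu1 i) h2)
    have hb' : n < u i + 1 := hfmono.lt_iff_lt.mp (lt_of_le_of_lt h1 (hu2 i))
    omega
  set y : ℕ → Bool := fun i => B (u i) (f (u i)) i with hy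
  have hkill : ∀ n (x : ℕ → Bool), (∀ i, f n ≤ i → i < f (n+1) → x i = y i) → x ∉ F n := by
    intro n x hx
    have hstep : f (n+1) = Φ n (f n) := rfl
    refine hB n (f n) x ?_
    intro i h1 h2
    rw [← hstep] at h2
    rw [hx i h1 h2, hy]
    simp only []
    rw [huniq n i h1 h2]
  refine ⟨f, y, hfmono, ?_⟩
  intro x hx
  obtain ⟨k, hk⟩ := mem_iUnion.mp (hAF hx)
  rw [Mset, mem_setOf_eq, eventually_atTop]
  refine ⟨k, fun n hn hagree => ?_⟩
  exact hkill n x hagree (hFmono k n hn hk)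

/-- Monotone comparison: if eventually each `f`-block contains a `g`-block on which `y = z`,
then `Mset g z ⊆ Mset f y`. -/
lemma Mset_subset {f g : ℕ → ℕ} {y z : ℕ → Bool} (hf : StrictMono f) (hg : StrictMono g)
    (h : ∀ᶠ n in atTop, ∃ k, Ico (g k) (g (k+1)) ⊆ Ico (f n) (f (n+1)) ∧
      ∀ i, g k ≤ i → i < g (k+1) → y i = z i) :
    Mset g z ⊆ Mset f y := by
  intro x hx
  by_contra hxM
  have hfreq : ∃ᶠ n in atTop, ∀ i, f n ≤ i → i < f (n+1) → x i = y i :=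
    (not_eventually.mp hxM).mono fun n h => not_not.mp h
  obtain ⟨K, hK⟩ := eventually_atTop.mp hx
  obtain ⟨n, hn, hmatch, k, hsub, hyz⟩ :=
    frequently_atTop.mp (hfreq.and_eventually h) (g K)
  have hgk : f n ≤ g k ∧ g (k+1) ≤ f (n+1) :=
    (Ico_subset_Ico_iff (hg (Nat.lt_succ_self k))).mp hsub
  have hkK : K ≤ k := by
    have : g K ≤ g k := le_trans hn (le_trans hf.le_apply hgk.1)
    exact hg.le_iff_le.mp this
  refine hK k hkK fun i h1 h2 => ?_
  have hi : i ∈ Ico (f n) (f (n+1)) := hsub ⟨h1, h2⟩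
  rw [hmatch i hi.1 hi.2]
  exact hyz i h1 h2

/-- Reverse comparison: if `Mset g false ⊆ Mset f y` then eventually every `f`-block
contains a full `g`-block. -/
lemma Mset_reverse {f g : ℕ → ℕ} {y : ℕ → Bool} (hf : StrictMono f) (hg : StrictMono g)
    (h : Mset g (fun _ => false) ⊆ Mset f y) :
    ∀ᶠ n in atTop, ∃ k, Ico (g k) (g (k+1)) ⊆ Ico (f n) (f (n+1)) := by
  classical
  by_contra hbad
  have hfreq : ∃ᶠ n in atTop, ∀ k, ¬ Ico (g k) (g (k+1)) ⊆ Ico (f n) (f (n+1)) :=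
    (not_eventually.mp hbad).mono fun n h => not_exists.mp h
  have hfr := frequently_atTop.mp hfreq
  -- build a sparse strictly increasing sequence of bad indices
  set ν : ℕ → ℕ := fun j => Nat.rec (Classical.choose (hfr 0))
    (fun _ p => Classical.choose (hfr (p + 2))) j with hν
  have hν0 : ∀ j, (ν (j+1) ≥ ν j + 2 ∧ ∀ k, ¬ Ico (g k) (g (k+1)) ⊆ Ico (f (ν (j+1))) (f (ν (j+1) + 1))) := by
    intro j
    have := Classical.choose_spec (hfr (ν j + 2))
    exact ⟨this.1, this.2⟩
  have hνbad : ∀ j, ∀ k, ¬ Ico (g k) (g (k+1)) ⊆ Ico (f (ν j)) (f (ν j + 1)) := by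
    intro j
    cases j with
    | zero => exact (Classical.choose_spec (hfr 0)).2
    | succ m => exact (hν0 m).2
  have hνmono : StrictMono ν := strictMono_nat_of_lt_succ (fun j => by have := (hν0 j).1; omega)
  have hνsp : ∀ j j', j < j' → ν j + 2 ≤ ν j' := by
    intro j j' hjj
    calc ν j + 2 ≤ ν (j+1) := (hν0 j).1
    _ ≤ ν j' := hνmono.monotone hjj
  -- the generic point
  set x : ℕ → Bool := fun i => if ∃ j, f (ν j) ≤ i ∧ i < f (ν j + 1) then y i else true with hx
  have hxy : ∀ j, ∀ i, f (ν j) ≤ i → i < f (ν j + 1) → x i = y i := by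
    intro j i h1 h2
    simp only [hx]
    rw [if_pos ⟨j, h1, h2⟩]
  -- x is not in Mset f y
  have hxnot : x ∉ Mset f y := by
    intro hmem
    obtain ⟨N, hN⟩ := eventually_atTop.mp hmem
    have : ν N ≥ N := hνmono.le_apply
    exact hN (ν N) this (hxy N)
  -- but x ∈ Mset g false
  have hxg : x ∈ Mset g (fun _ => false) := by
    refine Eventually.of_forall fun k => ?_
    intro hall
    -- derive: some i in the g-block with x i = true
    suffices hsuff : ∃ i, g k ≤ i ∧ i < g (k+1) ∧ x i = true by
      obtain ⟨i, h1, h2, h3⟩ := hsuff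
      have := hall i h1 h2
      rw [h3] at this
      exact Bool.true_eq_false_eq_False this
    by_cases hc : ∃ j, f (ν j) ≤ g k ∧ g k < f (ν j + 1)
    · obtain ⟨j, hj1, hj2⟩ := hc
      -- bad block: the g-block is not contained in the f-block ν j
      have hnot := hνbad j k
      have : ¬ (f (ν j) ≤ g k ∧ g (k+1) ≤ f (ν j + 1)) := by
        intro hcon
        exact hnot ((Ico_subset_Ico_iff (hg (Nat.lt_succ_self k))).mpr hcon)
      have hout : f (ν j + 1) < g (k+1) := by omega
      refine ⟨f (ν j + 1), by omega, hout, ?_⟩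
      -- f (ν j + 1) lies in the f-block (ν j + 1), which is not one of the copied blocks
      have hnc : ¬ ∃ j', f (ν j') ≤ f (ν j + 1) ∧ f (ν j + 1) < f (ν j' + 1) := by
        rintro ⟨j', hj'1, hj'2⟩
        have e1 : ν j' ≤ ν j + 1 := hf.le_iff_le.mp hj'1
        have e2 : ν j + 1 < ν j' + 1 := hf.lt_iff_lt.mp hj'2
        have : ν j' = ν j + 1 := by omega
        rcases lt_trichotomy j j' with hlt | rfl | hgt
        · have := hνsp j j' hlt; omega
        · omega
        · have h5 := hνsp j' j hgt; omega
      simp only [hx]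
      rw [if_neg hnc]
    · exact ⟨g k, le_rfl, hg (Nat.lt_succ_self k), by simp only [hx]; rw [if_neg hc]⟩
  exact hxnot (h hxg)

/-- A fast iterate of `g`. -/
noncomputable def hat (g : ℕ → ℕ) : ℕ → ℕ :=
  fun k => Nat.rec 0 (fun _ p => p + 1 + (Finset.range (p + 1)).sup g) k

lemma hat_strictMono (g : ℕ → ℕ) : StrictMono (hat g) :=
  strictMono_nat_of_lt_succ (fun k => by simp [hat]; omega)

lemma hat_spec (g : ℕ → ℕ) : ∀ k m, m ≤ hat g k → g m < hat g (k+1) := by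
  intro k m hm
  have : g m ≤ (Finset.range (hat g k + 1)).sup g :=
    Finset.le_sup (Finset.mem_range.mpr (by omega))
  show g m < hat g k + 1 + (Finset.range (hat g k + 1)).sup g
  omega

/-- From block containment to domination. -/
lemma dom_of_blocks {f g : ℕ → ℕ} (hf : StrictMono f)
    (h : ∀ᶠ n in atTop, ∃ k, Ico (hat g k) (hat g (k+1)) ⊆ Ico (f n) (f (n+1))) :
    DominatedBy g (fun n => f (n+1)) := by
  refine h.mono fun n ⟨k, hk⟩ => ?_
  have hgk := (Ico_subset_Ico_iff ((hat_strictMono g) (Nat.lt_succ_self k))).mp hk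
  have h1 : n ≤ hat g k := le_trans hf.le_apply hgk.1
  exact lt_of_lt_of_le (hat_spec g k n h1) hgk.2

/-- From infinitely many matches, a "next match" bounding function. -/
lemma match_bound {σ : ℕ → ℕ} (hσ : StrictMono σ) {x z : ℕ → Bool} (hx : x ∉ Mset σ z) :
    ∃ F : ℕ → ℕ, ∀ m, ∃ k, m ≤ σ k ∧ σ (k+1) ≤ F m ∧
      ∀ i, σ k ≤ i → i < σ (k+1) → x i = z i := by
  have hfreq : ∃ᶠ k in atTop, ∀ i, σ k ≤ i → i < σ (k+1) → x i = z i :=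
    (not_eventually.mp hx).mono fun k h => not_not.mp h
  have h : ∀ m : ℕ, ∃ k, k ≥ m ∧ ∀ i, σ k ≤ i → i < σ (k+1) → x i = z i :=
    fun m => frequently_atTop.mp hfreq m
  choose K hK1 hK2 using h
  refine ⟨fun m => σ (K m + 1), fun m => ⟨K m, le_trans (hK1 m) hσ.le_apply, le_rfl, hK2 m⟩⟩

/-- Iterated partition from a function `h`. -/
noncomputable def Pfun (h : ℕ → ℕ) : ℕ → ℕ :=
  fun n => Nat.rec 0 (fun _ p => max (h p) p + 1) n

lemma Pfun_strictMono (h : ℕ → ℕ) : StrictMono (Pfun h) :=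
  strictMono_nat_of_lt_succ (fun n => by simp [Pfun])

lemma Pfun_succ (h : ℕ → ℕ) (n : ℕ) : Pfun h (n+1) = max (h (Pfun h n)) (Pfun h n) + 1 := rfl

/-- The engulfing lemma. -/
lemma engulf {σ F h : ℕ → ℕ} {x z : ℕ → Bool} (hσ : StrictMono σ)
    (hF : ∀ m, ∃ k, m ≤ σ k ∧ σ (k+1) ≤ F m ∧ ∀ i, σ k ≤ i → i < σ (k+1) → x i = z i)
    (hd : DominatedBy F h) : Mset σ z ⊆ Mset (Pfun h) x := by
  refine Mset_subset (Pfun_strictMono h) hσ ?_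
  obtain ⟨N, hN⟩ := eventually_atTop.mp hd
  rw [eventually_atTop]
  refine ⟨N, fun n hn => ?_⟩
  obtain ⟨k, hk1, hk2, hk3⟩ := hF (Pfun h n)
  have hPn : N ≤ Pfun h n := le_trans hn (Pfun_strictMono h).le_apply
  have hlt : F (Pfun h n) < h (Pfun h n) := hN _ hPn
  refine ⟨k, ?_, hk3⟩
  rw [Ico_subset_Ico_iff (hσ (Nat.lt_succ_self k))]
  constructor
  · exact hk1
  · rw [Pfun_succ]
    exact le_trans hk2 (le_trans hlt.le (le_trans (le_max_left _ _) (Nat.le_succ _)))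

end CofAddAux

namespace CofAddAux
open Filter Set Cardinal

lemma not_univ_mem : (Set.univ : Set (ℕ → Bool)) ∉ meagerIdeal := univ_not_meagre

lemma isMeagre_singleton (x : ℕ → Bool) : IsMeagre ({x} : Set (ℕ → Bool)) := by
  rw [isMeagre_iff_countable_union_isNowhereDense]
  refine ⟨{{x}}, ?_, countable_singleton _, by simp⟩
  rintro t rfl
  show interior (closure ({x} : Set (ℕ → Bool))) = ∅
  rw [isClosed_singleton.closure_eq]
  rw [eq_empty_iff_forall_notMem]
  intro z hz
  obtain ⟨m, hm⟩ := exists_cyl_subset isOpen_interior hz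
  have hzx : z ∈ ({x} : Set (ℕ → Bool)) := interior_subset hz
  rw [mem_singleton_iff] at hzx
  subst hzx
  set w : ℕ → Bool := fun i => if i = m then ! z i else z i with hw
  have hwz : w ∈ {v : ℕ → Bool | ∀ i < m, v i = z i} := by
    intro i hi
    simp [hw, Nat.ne_of_lt hi]
  have hwz2 : w ∈ ({z} : Set (ℕ → Bool)) := interior_subset (hm hwz)
  rw [mem_singleton_iff] at hwz2
  have : w m = z m := by rw [hwz2]
  simp [hw] at this

lemma aleph0_le_frakD : Cardinal.aleph0 ≤ frakD := by
  have hne : Set.Nonempty {c | ∃ D : Set (ℕ → ℕ), (∀ g : ℕ → ℕ, ∃ f ∈ D, DominatedBy g f) ∧ Cardinal.mk D = c} :=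
    ⟨Cardinal.mk (Set.univ : Set (ℕ → ℕ)), Set.univ,
      fun g => ⟨fun n => g n + 1, trivial, Eventually.of_forall fun n => Nat.lt_succ_self _⟩, rfl⟩
  refine le_csInf hne ?_
  rintro c ⟨D, hD, rfl⟩
  by_contra hlt
  push_neg at hlt
  have hfin : D.Finite := by
    rw [← Cardinal.lt_aleph0_iff_set_finite]; exact hlt
  classical
  obtain ⟨f, hfD, hdom⟩ := hD (fun n => (hfin.toFinset.sup (fun f => f n)) + 1)
  obtain ⟨n, hn⟩ := hdom.exists
  have h2 : f n ≤ hfin.toFinset.sup (fun f => f n) :=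
    Finset.le_sup (f := fun f => f n) (hfin.mem_toFinset.mpr hfD)
  have h3 : (hfin.toFinset.sup (fun f => f n)) + 1 < f n := hn
  exact Nat.not_succ_le_self _ (le_of_lt (lt_of_lt_of_le h3 h2))

/-- `cof(𝓑) ≤ max(non(𝓑), 𝔡)` : the engulfing construction. -/
lemma cof_le : cofIdeal meagerIdeal ≤ max (nonIdeal meagerIdeal) frakD := by
  obtain ⟨D, hDdom, hDmk⟩ : ∃ D : Set (ℕ → ℕ),
      (∀ g : ℕ → ℕ, ∃ f ∈ D, DominatedBy g f) ∧ Cardinal.mk D = frakD :=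
    csInf_mem (s := {c | ∃ D : Set (ℕ → ℕ), (∀ g : ℕ → ℕ, ∃ f ∈ D, DominatedBy g f) ∧ Cardinal.mk D = c})
      ⟨Cardinal.mk (Set.univ : Set (ℕ → ℕ)), Set.univ,
      fun g => ⟨fun n => g n + 1, trivial, Eventually.of_forall fun n => Nat.lt_succ_self _⟩, rfl⟩
  obtain ⟨Y, hYnm, hYmk⟩ : ∃ Y : Set (ℕ → Bool), Y ∉ meagerIdeal ∧ Cardinal.mk Y = nonIdeal meagerIdeal :=
    csInf_mem (s := {c | ∃ A : Set (ℕ → Bool), A ∉ meagerIdeal ∧ Cardinal.mk A = c})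
      ⟨Cardinal.mk (Set.univ : Set (ℕ → Bool)), Set.univ, not_univ_mem, rfl⟩
  set 𝒜 : Set (Set (ℕ → Bool)) := Set.image2 (fun h y => Mset (Pfun h) y) D Y with h𝒜
  have h1 : 𝒜 ⊆ meagerIdeal := by
    rintro t ⟨h, hh, y, hy, rfl⟩
    exact meagre_Mset (Pfun_strictMono h) y
  have h2 : ∀ B ∈ meagerIdeal, ∃ C ∈ 𝒜, B ⊆ C := by
    intro B hB
    obtain ⟨σ, z, hσ, hBσ⟩ := exists_Mset hB
    have hYx : ∃ x ∈ Y, x ∉ Mset σ z := by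
      by_contra hc
      push_neg at hc
      exact hYnm (IsMeagre.mono hc (meagre_Mset hσ z))
    obtain ⟨x, hxY, hxM⟩ := hYx
    obtain ⟨F, hF⟩ := match_bound hσ hxM
    obtain ⟨h, hhD, hdom⟩ := hDdom F
    refine ⟨Mset (Pfun h) x, mem_image2_of_mem hhD hxY, ?_⟩
    exact hBσ.trans (engulf hσ hF hdom)
  have h3 : cofIdeal meagerIdeal ≤ Cardinal.mk 𝒜 := csInf_le' ⟨𝒜, h1, h2, rfl⟩
  refine h3.trans ?_
  have h4 : Cardinal.mk 𝒜 ≤ Cardinal.mk (D ×ˢ Y : Set ((ℕ → ℕ) × (ℕ → Bool))) := by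
    rw [h𝒜, ← Set.image_prod]
    exact Cardinal.mk_image_le
  have h5 : Cardinal.mk (D ×ˢ Y : Set ((ℕ → ℕ) × (ℕ → Bool))) = Cardinal.mk D * Cardinal.mk Y := by
    rw [Cardinal.mk_congr (Equiv.Set.prod D Y), Cardinal.mk_prod, Cardinal.lift_id, Cardinal.lift_id]
  refine (h4.trans_eq h5).trans ?_
  rw [hDmk, hYmk]
  calc frakD * nonIdeal meagerIdeal ≤ max (max frakD (nonIdeal meagerIdeal)) Cardinal.aleph0 :=
        Cardinal.mul_le_max _ _
    _ = max frakD (nonIdeal meagerIdeal) :=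
        max_eq_left (aleph0_le_frakD.trans (le_max_left _ _))
    _ = max (nonIdeal meagerIdeal) frakD := max_comm _ _

/-- `max(non(𝓑), 𝔡) ≤ cof(𝓑)`. -/
lemma le_cof : max (nonIdeal meagerIdeal) frakD ≤ cofIdeal meagerIdeal := by
  obtain ⟨A, hAI, hAcof, hAmk⟩ : ∃ A ⊆ meagerIdeal,
      (∀ B ∈ meagerIdeal, ∃ C ∈ A, B ⊆ C) ∧ Cardinal.mk A = cofIdeal meagerIdeal :=
    csInf_mem (s := {c | ∃ A ⊆ meagerIdeal, (∀ B ∈ meagerIdeal, ∃ C ∈ A, B ⊆ C) ∧ Cardinal.mk A = c})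
      ⟨Cardinal.mk meagerIdeal, meagerIdeal, subset_rfl,
      fun B hB => ⟨B, hB, subset_rfl⟩, rfl⟩
  refine max_le ?_ ?_
  · -- non ≤ cof
    have hex : ∀ C : ↥A, ∃ x : ℕ → Bool, x ∉ (C : Set (ℕ → Bool)) := by
      rintro ⟨C, hC⟩
      by_contra hc
      push_neg at hc
      exact not_univ_mem (IsMeagre.mono (fun x _ => hc x) (hAI hC))
    choose xs hxs using hex
    have hY : Set.range xs ∉ meagerIdeal := by
      intro hmem
      obtain ⟨C, hCA, hsub⟩ := hAcof _ hmem
      exact hxs ⟨C, hCA⟩ (hsub (mem_range_self _))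
    calc nonIdeal meagerIdeal ≤ Cardinal.mk (Set.range xs) := csInf_le' ⟨Set.range xs, hY, rfl⟩
      _ ≤ Cardinal.mk A := Cardinal.mk_range_le
      _ = cofIdeal meagerIdeal := hAmk
  · -- 𝔡 ≤ cof
    have hex : ∀ C : ↥A, ∃ f : ℕ → ℕ, ∃ y : ℕ → Bool,
        StrictMono f ∧ (C : Set (ℕ → Bool)) ⊆ Mset f y :=
      fun C => exists_Mset (hAI C.2)
    choose fs ys hfs hsub using hex
    set Df : Set (ℕ → ℕ) := Set.range (fun C => fun n => fs C (n+1)) with hDf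
    have hDdom : ∀ g : ℕ → ℕ, ∃ f ∈ Df, DominatedBy g f := by
      intro g
      have hmg : Mset (hat g) (fun _ => false) ∈ meagerIdeal :=
        meagre_Mset (hat_strictMono g) _
      obtain ⟨C, hCA, hCsub⟩ := hAcof _ hmg
      refine ⟨fun n => fs ⟨C, hCA⟩ (n+1), mem_range_self _, ?_⟩
      refine dom_of_blocks (hfs ⟨C, hCA⟩) ?_
      exact Mset_reverse (hfs ⟨C, hCA⟩) (hat_strictMono g) (hCsub.trans (hsub ⟨C, hCA⟩))
    calc frakD ≤ Cardinal.mk Df := csInf_le' ⟨Df, hDdom, rfl⟩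
      _ ≤ Cardinal.mk A := Cardinal.mk_range_le
      _ = cofIdeal meagerIdeal := hAmk

lemma sUnion_singletons : ⋃₀ (Set.range fun x : ℕ → Bool => ({x} : Set (ℕ → Bool))) = Set.univ := by
  ext x
  simp only [mem_sUnion, mem_range, Set.mem_univ, iff_true]
  exact ⟨{x}, ⟨x, rfl⟩, rfl⟩

/-- `add(𝓑) ≤ min(cov(𝓑), 𝔟)`. -/
lemma add_le : addIdeal meagerIdeal ≤ min (covIdeal meagerIdeal) frakB := by
  refine le_min ?_ ?_
  · -- add ≤ cov
    obtain ⟨A, hAI, hAcov, hAmk⟩ : ∃ A ⊆ meagerIdeal,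
        ⋃₀ A = Set.univ ∧ Cardinal.mk A = covIdeal meagerIdeal := by
      refine csInf_mem (s := {c | ∃ A ⊆ meagerIdeal, ⋃₀ A = Set.univ ∧ Cardinal.mk A = c})
        ⟨Cardinal.mk (Set.range fun x : ℕ → Bool => ({x} : Set (ℕ → Bool))),
        Set.range fun x => {x}, ?_, sUnion_singletons, rfl⟩
      rintro t ⟨x, rfl⟩
      exact isMeagre_singleton x
    refine csInf_le' ⟨A, hAI, ?_, hAmk⟩
    rw [hAcov]
    exact not_univ_mem
  · -- add ≤ 𝔟
    obtain ⟨B, hBunb, hBmk⟩ : ∃ B : Set (ℕ → ℕ),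
        (∀ f : ℕ → ℕ, ∃ g ∈ B, ¬ DominatedBy g f) ∧ Cardinal.mk B = frakB := by
      refine csInf_mem (s := {c | ∃ B : Set (ℕ → ℕ), (∀ f : ℕ → ℕ, ∃ g ∈ B, ¬ DominatedBy g f) ∧ Cardinal.mk B = c})
        ⟨Cardinal.mk (Set.univ : Set (ℕ → ℕ)), Set.univ, fun f => ⟨f, trivial, ?_⟩, rfl⟩
      intro hd
      obtain ⟨n, hn⟩ := hd.exists
      omega
    set 𝒜 : Set (Set (ℕ → Bool)) := Set.range (fun g : ↥B => Mset (hat g) (fun _ => false)) with h𝒜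
    have h1 : 𝒜 ⊆ meagerIdeal := by
      rintro t ⟨g, rfl⟩
      exact meagre_Mset (hat_strictMono g) _
    have h2 : ⋃₀ 𝒜 ∉ meagerIdeal := by
      intro hmem
      obtain ⟨f, y, hf, hsub⟩ := exists_Mset hmem
      obtain ⟨g, hgB, hgnd⟩ := hBunb (fun n => f (n+1))
      refine hgnd ?_
      refine dom_of_blocks hf ?_
      refine Mset_reverse (y := y) hf (hat_strictMono g) ?_
      refine Subset.trans ?_ hsub
      intro x hx
      exact ⟨Mset (hat g) (fun _ => false), ⟨⟨g, hgB⟩, rfl⟩, hx⟩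
    calc addIdeal meagerIdeal ≤ Cardinal.mk 𝒜 := csInf_le' ⟨𝒜, h1, h2, rfl⟩
      _ ≤ Cardinal.mk B := Cardinal.mk_range_le
      _ = frakB := hBmk

/-- `min(cov(𝓑), 𝔟) ≤ add(𝓑)` : the engulfing construction. -/
lemma le_add : min (covIdeal meagerIdeal) frakB ≤ addIdeal meagerIdeal := by
  obtain ⟨A, hAI, hAun, hAmk⟩ : ∃ A ⊆ meagerIdeal,
      ⋃₀ A ∉ meagerIdeal ∧ Cardinal.mk A = addIdeal meagerIdeal := by
    refine csInf_mem (s := {c | ∃ A ⊆ meagerIdeal, ⋃₀ A ∉ meagerIdeal ∧ Cardinal.mk A = c})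
      ⟨Cardinal.mk (Set.range fun x : ℕ → Bool => ({x} : Set (ℕ → Bool))),
      Set.range fun x => {x}, ?_, ?_, rfl⟩
    · rintro t ⟨x, rfl⟩
      exact isMeagre_singleton x
    · rw [sUnion_singletons]
      exact not_univ_mem
  by_contra hcon
  push_neg at hcon
  rw [lt_min_iff, ← hAmk] at hcon
  obtain ⟨hltcov, hltb⟩ := hcon
  have hex : ∀ C : ↥A, ∃ f : ℕ → ℕ, ∃ y : ℕ → Bool,
      StrictMono f ∧ (C : Set (ℕ → Bool)) ⊆ Mset f y :=
    fun C => exists_Mset (hAI C.2)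
  choose σs zs hσs hsubs using hex
  set famM : Set (Set (ℕ → Bool)) := Set.range (fun C : ↥A => Mset (σs C) (zs C)) with hfam
  have hne : ⋃₀ famM ≠ Set.univ := by
    intro heq
    have h1 : famM ⊆ meagerIdeal := by
      rintro t ⟨C, rfl⟩
      exact meagre_Mset (hσs C) _
    have : covIdeal meagerIdeal ≤ Cardinal.mk famM := csInf_le' ⟨famM, h1, heq, rfl⟩
    exact absurd (this.trans Cardinal.mk_range_le) (not_le.mpr hltcov)
  obtain ⟨x, hx⟩ : ∃ x : ℕ → Bool, ∀ C : ↥A, x ∉ Mset (σs C) (zs C) := by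
    have : ∃ x, x ∉ ⋃₀ famM := by
      by_contra hc
      push_neg at hc
      exact hne (eq_univ_iff_forall.mpr hc)
    obtain ⟨x, hx⟩ := this
    exact ⟨x, fun C hmem => hx ⟨Mset (σs C) (zs C), ⟨C, rfl⟩, hmem⟩⟩
  have hmb : ∀ C : ↥A, ∃ F : ℕ → ℕ, ∀ m, ∃ k, m ≤ σs C k ∧ σs C (k+1) ≤ F m ∧
      ∀ i, σs C k ≤ i → i < σs C (k+1) → x i = zs C i :=
    fun C => match_bound (hσs C) (hx C)
  choose Fs hFs using hmb
  obtain ⟨h, hh⟩ : ∃ h : ℕ → ℕ, ∀ C : ↥A, DominatedBy (Fs C) h := by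
    by_contra hc
    push_neg at hc
    have : frakB ≤ Cardinal.mk (Set.range Fs) := by
      refine csInf_le' ⟨Set.range Fs, ?_, rfl⟩
      intro f
      obtain ⟨C, hC⟩ := hc f
      exact ⟨Fs C, mem_range_self _, hC⟩
    exact absurd (this.trans Cardinal.mk_range_le) (not_le.mpr hltb)
  refine hAun (IsMeagre.mono ?_ (meagre_Mset (Pfun_strictMono h) x))
  intro w hw
  obtain ⟨s, hsA, hws⟩ := hw
  exact engulf (hσs ⟨s, hsA⟩) (hFs ⟨s, hsA⟩) (hh ⟨s, hsA⟩) (hsubs ⟨s, hsA⟩ hws)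

end CofAddAux

/-- `cof(𝓑) = max {non(𝓑), 𝔡}` and `add(𝓑) = min {cov(𝓑), 𝔟}`. -/
theorem cof_add_meager_eq :
    cofIdeal meagerIdeal = max (nonIdeal meagerIdeal) frakD ∧
    addIdeal meagerIdeal = min (covIdeal meagerIdeal) frakB := by
  exact ⟨le_antisymm CofAddAux.cof_le CofAddAux.le_cof,
    le_antisymm CofAddAux.add_le CofAddAux.le_add⟩
end

section
/- 𝔰 ≤ 𝔡 and 𝔟 ≤ 𝔯. -/
open Filter

/-- `x` *splits* `y` if both `x ∩ y` and `y \ x` are infinite. -/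
def Splits (x y : Set ℕ) : Prop := (x ∩ y).Infinite ∧ (y \ x).Infinite

/-- The splitting number `𝔰`: the least cardinality of a family `S` of subsets of `ℕ`
such that every infinite `y ⊆ ℕ` is split by some member of `S`. -/
noncomputable def frakS : Cardinal :=
  sInf {c | ∃ S : Set (Set ℕ),
    (∀ y : Set ℕ, y.Infinite → ∃ x ∈ S, Splits x y) ∧ Cardinal.mk S = c}

/-- The reaping number `𝔯`: the least cardinality of a family `R` of infinite subsets
of `ℕ` such that no single `x ⊆ ℕ` splits every member of `R`. -/
noncomputable def frakR : Cardinal :=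
  sInf {c | ∃ R : Set (Set ℕ), (∀ y ∈ R, Set.Infinite y) ∧
    (∀ x : Set ℕ, ∃ y ∈ R, ¬ Splits x y) ∧ Cardinal.mk R = c}

namespace Aux

noncomputable def gfn (y : Set ℕ) (n : ℕ) : ℕ := sInf {m | m ∈ y ∧ n < m}

lemma gfn_spec {y : Set ℕ} (hy : y.Infinite) (n : ℕ) :
    gfn y n ∈ y ∧ n < gfn y n := by
  have h : {m | m ∈ y ∧ n < m}.Nonempty := by
    obtain ⟨m, hm, hlt⟩ := hy.exists_gt n
    exact ⟨m, hm, hlt⟩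
  exact Nat.sInf_mem h

def F (f : ℕ → ℕ) (n : ℕ) : ℕ := max (f n) n + 1

def av (f : ℕ → ℕ) (k : ℕ) : ℕ := (F f)^[k] 0

lemma av_succ (f : ℕ → ℕ) (k : ℕ) : av f (k+1) = F f (av f k) :=
  Function.iterate_succ_apply' _ _ _

lemma av_strictMono (f : ℕ → ℕ) : StrictMono (av f) :=
  strictMono_nat_of_lt_succ fun k => by
    rw [av_succ]; exact lt_of_le_of_lt (le_max_right _ _) (Nat.lt_succ_self _)

lemma f_lt_av_succ (f : ℕ → ℕ) (k : ℕ) : f (av f k) < av f (k+1) := by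
  rw [av_succ]; exact lt_of_le_of_lt (le_max_left _ _) (Nat.lt_succ_self _)

def xf (f : ℕ → ℕ) : Set ℕ := {m | ∃ k, av f (2*k) ≤ m ∧ m < av f (2*k+1)}

lemma unbdd_infinite {s : Set ℕ} (h : ∀ n, ∃ m ∈ s, n < m) : s.Infinite := by
  intro hf
  obtain ⟨b, hb⟩ := hf.bddAbove
  obtain ⟨m, hm, hlt⟩ := h b
  exact absurd (hb hm) (not_le.mpr hlt)

lemma splits_of_dom {y : Set ℕ} (hy : y.Infinite) {f : ℕ → ℕ}
    (h : DominatedBy (gfn y) f) : Splits (xf f) y := by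
  obtain ⟨N, hN⟩ := eventually_atTop.mp h
  have hk : ∀ k, k ≤ av f k := fun _ => (av_strictMono f).le_apply
  have key : ∀ i, N ≤ i → gfn y (av f i) ∈ y ∧ av f i < gfn y (av f i)
      ∧ gfn y (av f i) < av f (i+1) := by
    intro i hi
    obtain ⟨h1, h2⟩ := gfn_spec hy (av f i)
    refine ⟨h1, h2, ?_⟩
    have hlt : gfn y (av f i) < f (av f i) := hN _ (le_trans hi (hk i))
    exact hlt.trans (f_lt_av_succ f i)
  have hmono := (av_strictMono f).monotone
  constructor
  · apply unbdd_infinite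
    intro n
    obtain ⟨h1, h2, h3⟩ := key (2 * (N + n)) (by omega)
    refine ⟨gfn y (av f (2 * (N + n))), ⟨⟨N + n, le_of_lt h2, h3⟩, h1⟩, ?_⟩
    calc n ≤ 2 * (N + n) := by omega
      _ ≤ av f (2 * (N + n)) := hk _
      _ < _ := h2
  · apply unbdd_infinite
    intro n
    obtain ⟨h1, h2, h3⟩ := key (2 * (N + n) + 1) (by omega)
    refine ⟨gfn y (av f (2 * (N + n) + 1)), ⟨h1, ?_⟩, ?_⟩
    · rintro ⟨j, hj1, hj2⟩
      rcases le_or_gt (2*j+1) (2*(N+n)+1) with hle | hlt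
      · exact absurd h2 (not_lt.mpr (le_of_lt (lt_of_lt_of_le hj2 (hmono hle))))
      · have : 2*(N+n)+1+1 ≤ 2*j := by omega
        exact absurd h3 (not_lt.mpr (le_trans (hmono this) hj1))
    · calc n ≤ 2 * (N + n) + 1 := by omega
        _ ≤ av f (2 * (N + n) + 1) := hk _
        _ < _ := h2

end Aux

/-- `𝔰 ≤ 𝔡` and `𝔟 ≤ 𝔯`. -/
theorem frakS_le_frakD_and_frakB_le_frakR : frakS ≤ frakD ∧ frakB ≤ frakR := by

  constructor
  · apply le_csInf
    · exact ⟨Cardinal.mk (Set.univ : Set (ℕ → ℕ)), Set.univ,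
        fun g => ⟨fun n => g n + 1, trivial,
          Filter.Eventually.of_forall fun n => Nat.lt_succ_self _⟩, rfl⟩
    · rintro c ⟨D, hD, rfl⟩
      have h1 : frakS ≤ Cardinal.mk ↥(Aux.xf '' D) := by
        apply csInf_le'
        refine ⟨Aux.xf '' D, fun y hy => ?_, rfl⟩
        obtain ⟨f, hfD, hdom⟩ := hD (Aux.gfn y)
        exact ⟨Aux.xf f, Set.mem_image_of_mem _ hfD, Aux.splits_of_dom hy hdom⟩
      exact h1.trans Cardinal.mk_image_le
  · apply le_csInf
    · refine ⟨Cardinal.mk {y : Set ℕ | y.Infinite}, {y | y.Infinite},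
        fun y hy => hy, fun x => ?_, rfl⟩
      by_cases hx : x.Infinite
      · exact ⟨x, hx, fun h => h.2 (by simp)⟩
      · refine ⟨xᶜ, ?_, fun h => h.1 (by simp)⟩
        exact (Set.not_infinite.mp hx).infinite_compl
    · rintro c ⟨R, hRinf, hR, rfl⟩
      have h1 : frakB ≤ Cardinal.mk ↥(Aux.gfn '' R) := by
        apply csInf_le'
        refine ⟨Aux.gfn '' R, fun f => ?_, rfl⟩
        obtain ⟨y, hyR, hns⟩ := hR (Aux.xf f)
        exact ⟨Aux.gfn y, Set.mem_image_of_mem _ hyR,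
          fun hd => hns (Aux.splits_of_dom (hRinf y hyR) hd)⟩
      exact h1.trans Cardinal.mk_image_le
end

section
/- 𝔥 ≤ 𝔭𝔞𝔯₂: the distributivity number is less than or equal to the partition number for 2-colorings of pairs. -/
open Filter

/-- A 2-coloring of `[ℕ]^n`, the `n`-element subsets of `ℕ`. -/
def Coloring (n : ℕ) : Type := {s : Finset ℕ // s.card = n} → Bool

/-- An infinite `Q ⊆ ℕ` is *almost homogeneous* for `π : [ℕ]^n → 2` if there is a
finite `K ⊆ ℕ` such that `π` is constant on the `n`-element subsets of `Q \ K`. -/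
def AlmostHomog {n : ℕ} (π : Coloring n) (Q : Set ℕ) : Prop :=
  ∃ (K : Finset ℕ) (c : Bool), ∀ s : {s : Finset ℕ // s.card = n},
    (s.1 : Set ℕ) ⊆ Q \ (K : Set ℕ) → π s = c

/-- The homogeneity number `𝔥𝔬𝔪_n`: the least cardinality of a family `H` of infinite
subsets of `ℕ` such that every coloring `π : [ℕ]^n → 2` has an almost homogeneous
set in `H`. -/
noncomputable def homNum (n : ℕ) : Cardinal :=
  sInf {c | ∃ H : Set (Set ℕ), (∀ Q ∈ H, Set.Infinite Q) ∧
    (∀ π : Coloring n, ∃ Q ∈ H, AlmostHomog π Q) ∧ Cardinal.mk H = c}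

/-- The partition number `𝔭𝔞𝔯_n`: the least cardinality of a family `P` of colorings
`[ℕ]^n → 2` such that no single infinite `Q ⊆ ℕ` is almost homogeneous for every
member of `P`. -/
noncomputable def parNum (n : ℕ) : Cardinal :=
  sInf {c | ∃ P : Set (Coloring n),
    (∀ Q : Set ℕ, Q.Infinite → ∃ π ∈ P, ¬ AlmostHomog π Q) ∧ Cardinal.mk P = c}

/-- A family `O ⊆ [ℕ]^ℕ` of infinite subsets of `ℕ` is *open* in the lower topology:
whenever `X ∈ O` and `Y` is an infinite subset of `ℕ` with `Y \ X` finite, `Y ∈ O`. -/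
def LowerOpen (O : Set (Set ℕ)) : Prop :=
  (∀ X ∈ O, Set.Infinite X) ∧
  ∀ X ∈ O, ∀ Y : Set ℕ, Y.Infinite → (Y \ X).Finite → Y ∈ O

/-- `O` is *dense* (in the lower topology): every infinite `A ⊆ ℕ` has an infinite
subset belonging to `O`. -/
def LowerDense (O : Set (Set ℕ)) : Prop :=
  ∀ A : Set ℕ, A.Infinite → ∃ B ⊆ A, B.Infinite ∧ B ∈ O

/-- The distributivity number `𝔥`: the least cardinality of a family of dense open
subsets of `[ℕ]^ℕ` with empty intersection. -/
noncomputable def frakH : Cardinal :=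
  sInf {c | ∃ F : Set (Set (Set ℕ)), (∀ O ∈ F, LowerOpen O ∧ LowerDense O) ∧
    ⋂₀ F = ∅ ∧ Cardinal.mk F = c}

noncomputable def pairC (π : Coloring 2) (a b : ℕ) : Bool :=
  if h : a ≠ b then π ⟨{a, b}, Finset.card_pair h⟩ else false

lemma pairC_eq (π : Coloring 2) {a b : ℕ} (h : a ≠ b) (hc : ({a,b} : Finset ℕ).card = 2) :
    π ⟨{a,b}, hc⟩ = pairC π a b := by simp [pairC, h]

lemma pairC_comm (π : Coloring 2) (a b : ℕ) : pairC π a b = pairC π b a := by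
  rcases eq_or_ne a b with rfl | h
  · rfl
  · have hp : ({a,b} : Finset ℕ) = {b,a} := Finset.pair_comm a b
    rw [pairC, pairC, dif_pos h, dif_pos h.symm]
    congr 1
    exact Subtype.ext hp

lemma step_lemma (π : Coloring 2) (S : Set ℕ) (hS : S.Infinite) :
    ∃ c : Bool, {x | x ∈ S ∧ sInf S < x ∧ pairC π (sInf S) x = c}.Infinite := by
  by_contra h
  push_neg at h
  have hsub : S ⊆ (Set.Iic (sInf S) ∪ {x | x ∈ S ∧ sInf S < x ∧ pairC π (sInf S) x = true}) ∪
      {x | x ∈ S ∧ sInf S < x ∧ pairC π (sInf S) x = false} := by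
    intro x hx
    rcases lt_or_ge (sInf S) x with h1 | h1
    · cases hc : pairC π (sInf S) x
      · exact Or.inr ⟨hx, h1, hc⟩
      · exact Or.inl (Or.inr ⟨hx, h1, hc⟩)
    · exact Or.inl (Or.inl h1)
  exact hS ((((Set.finite_Iic _).union (h true)).union (h false)).subset hsub)

noncomputable def ramF (π : Coloring 2) (A : {S : Set ℕ // S.Infinite}) :
    ℕ → {S : Set ℕ // S.Infinite}
  | 0 => A
  | n + 1 =>
    ⟨_, Classical.choose_spec (step_lemma π (ramF π A n).1 (ramF π A n).2)⟩

noncomputable def ramg (π : Coloring 2) (A : {S : Set ℕ // S.Infinite}) (n : ℕ) : Bool :=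
  Classical.choose (step_lemma π (ramF π A n).1 (ramF π A n).2)

noncomputable def ramf (π : Coloring 2) (A : {S : Set ℕ // S.Infinite}) (n : ℕ) : ℕ :=
  sInf (ramF π A n).1

lemma ramF_succ (π : Coloring 2) (A : {S : Set ℕ // S.Infinite}) (n : ℕ) :
    (ramF π A (n+1)).1 =
      {x | x ∈ (ramF π A n).1 ∧ ramf π A n < x ∧ pairC π (ramf π A n) x = ramg π A n} := rfl

lemma ramf_mem (π : Coloring 2) (A : {S : Set ℕ // S.Infinite}) (n : ℕ) :
    ramf π A n ∈ (ramF π A n).1 := Nat.sInf_mem (ramF π A n).2.nonempty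

lemma ramF_mono (π : Coloring 2) (A : {S : Set ℕ // S.Infinite}) {m n : ℕ} (h : m ≤ n) :
    (ramF π A n).1 ⊆ (ramF π A m).1 := by
  induction n, h using Nat.le_induction with
  | base => exact subset_rfl
  | succ n hmn ih =>
    refine subset_trans ?_ ih
    rw [ramF_succ]
    intro x hx; exact hx.1

lemma ram_key (π : Coloring 2) (A : {S : Set ℕ // S.Infinite}) {i j : ℕ} (h : i < j) :
    ramf π A i < ramf π A j ∧ pairC π (ramf π A i) (ramf π A j) = ramg π A i := by
  have : ramf π A j ∈ (ramF π A (i+1)).1 := ramF_mono π A h (ramf_mem π A j)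
  rw [ramF_succ] at this
  exact ⟨this.2.1, this.2.2⟩

lemma ramf_strictMono (π : Coloring 2) (A : {S : Set ℕ // S.Infinite}) :
    StrictMono (ramf π A) := fun i j h => (ram_key π A h).1

lemma bool_pigeonhole (g : ℕ → Bool) : ∃ c : Bool, {n | g n = c}.Infinite := by
  by_contra h
  push_neg at h
  have : (Set.univ : Set ℕ) ⊆ {n | g n = true} ∪ {n | g n = false} := by
    intro n _
    cases hc : g n
    · exact Or.inr hc
    · exact Or.inl hc
  exact Set.infinite_univ (((h true).union (h false)).subset this)

/-- Infinite Ramsey theorem for pairs, relativized to an infinite set. -/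
theorem ramsey2 (π : Coloring 2) (A : Set ℕ) (hA : A.Infinite) :
    ∃ B ⊆ A, B.Infinite ∧ ∃ c : Bool,
      ∀ s : {s : Finset ℕ // s.card = 2}, (s.1 : Set ℕ) ⊆ B → π s = c := by
  set A' : {S : Set ℕ // S.Infinite} := ⟨A, hA⟩
  obtain ⟨c, hc⟩ := bool_pigeonhole (ramg π A')
  refine ⟨ramf π A' '' {n | ramg π A' n = c}, ?_, ?_, c, ?_⟩
  · rintro x ⟨n, _, rfl⟩
    exact ramF_mono π A' (Nat.zero_le n) (ramf_mem π A' n)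
  · exact hc.image ((ramf_strictMono π A').injective.injOn)
  · rintro ⟨s, hs⟩ hsub
    obtain ⟨a, b, hab, rfl⟩ := Finset.card_eq_two.mp hs
    have ha : a ∈ ramf π A' '' {n | ramg π A' n = c} := hsub (by simp)
    have hb : b ∈ ramf π A' '' {n | ramg π A' n = c} := hsub (by simp)
    obtain ⟨i, hi, rfl⟩ := ha
    obtain ⟨j, hj, rfl⟩ := hb
    rw [pairC_eq π hab]
    have hij : i ≠ j := fun h => hab (by rw [h])
    rcases hij.lt_or_gt with h | h
    · rw [(ram_key π A' h).2]; exact hi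
    · rw [pairC_comm, (ram_key π A' h).2]; exact hj

lemma parSet_nonempty :
    {c | ∃ P : Set (Coloring 2),
      (∀ Q : Set ℕ, Q.Infinite → ∃ π ∈ P, ¬ AlmostHomog π Q) ∧ Cardinal.mk P = c}.Nonempty := by
  classical
  refine ⟨_, Set.univ, ?_, rfl⟩
  intro Q hQ
  refine ⟨fun s => decide (∃ q ∈ Q, q ∉ s.1 ∧ (∃ a ∈ s.1, a < q) ∧ ∃ b ∈ s.1, q < b),
    Set.mem_univ _, ?_⟩
  rintro ⟨K, c, hK⟩
  set n := K.sup id with hn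
  obtain ⟨q1, hq1Q, hq1n⟩ := (hQ.diff (Set.finite_Iic n)).nonempty
  have hq1n : n < q1 := lt_of_not_ge hq1n
  have h2ne : {x | x ∈ Q ∧ q1 < x}.Nonempty := by
    obtain ⟨x, hx, hx2⟩ := (hQ.diff (Set.finite_Iic q1)).nonempty
    exact ⟨x, hx, lt_of_not_ge hx2⟩
  set q2 := sInf {x | x ∈ Q ∧ q1 < x} with hq2def
  have hq2 := Nat.sInf_mem h2ne
  have h3ne : {x | x ∈ Q ∧ q2 < x}.Nonempty := by
    obtain ⟨x, hx, hx2⟩ := (hQ.diff (Set.finite_Iic q2)).nonempty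
    exact ⟨x, hx, lt_of_not_ge hx2⟩
  set q3 := sInf {x | x ∈ Q ∧ q2 < x} with hq3def
  have hq3 := Nat.sInf_mem h3ne
  have h12 : q1 < q2 := hq2.2
  have h23 : q2 < q3 := hq3.2
  have h13 : q1 < q3 := h12.trans h23
  have hnotK : ∀ x, n < x → x ∉ (K : Set ℕ) := by
    intro x hx hxK
    exact absurd (Finset.le_sup (f := id) hxK) (not_le.mpr hx)
  have sub1 : (({q1, q2} : Finset ℕ) : Set ℕ) ⊆ Q \ (K : Set ℕ) := by
    intro x hx
    simp only [Finset.coe_insert, Finset.coe_singleton, Set.mem_insert_iff,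
      Set.mem_singleton_iff] at hx
    rcases hx with rfl | rfl
    · exact ⟨hq1Q, hnotK _ hq1n⟩
    · exact ⟨hq2.1, hnotK _ (hq1n.trans h12)⟩
  have sub2 : (({q1, q3} : Finset ℕ) : Set ℕ) ⊆ Q \ (K : Set ℕ) := by
    intro x hx
    simp only [Finset.coe_insert, Finset.coe_singleton, Set.mem_insert_iff,
      Set.mem_singleton_iff] at hx
    rcases hx with rfl | rfl
    · exact ⟨hq1Q, hnotK _ hq1n⟩
    · exact ⟨hq3.1, hnotK _ (hq1n.trans h13)⟩
  have e1 := hK ⟨{q1, q2}, Finset.card_pair h12.ne⟩ sub1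
  have e2 := hK ⟨{q1, q3}, Finset.card_pair h13.ne⟩ sub2
  simp only [decide_eq_true_eq] at e1 e2
  have he1 : ¬ (∃ q ∈ Q, q ∉ ({q1, q2} : Finset ℕ) ∧
      (∃ a ∈ ({q1, q2} : Finset ℕ), a < q) ∧ ∃ b ∈ ({q1, q2} : Finset ℕ), q < b) := by
    rintro ⟨q, hqQ, hqs, ⟨a, ha, haq⟩, ⟨b, hb, hqb⟩⟩
    simp only [Finset.mem_insert, Finset.mem_singleton] at ha hb hqs
    have hq2' : q < q2 := by
      rcases hb with rfl | rfl
      · exact hqb.trans h12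
      · exact hqb
    have hq1' : q1 < q := by
      rcases ha with rfl | rfl
      · exact haq
      · exact absurd (haq.trans hq2') (lt_irrefl _)
    exact absurd (Nat.sInf_le ⟨hqQ, hq1'⟩ : q2 ≤ q) (not_le.mpr hq2')
  have he2 : (∃ q ∈ Q, q ∉ ({q1, q3} : Finset ℕ) ∧
      (∃ a ∈ ({q1, q3} : Finset ℕ), a < q) ∧ ∃ b ∈ ({q1, q3} : Finset ℕ), q < b) := by
    refine ⟨q2, hq2.1, ?_, ⟨q1, by simp, h12⟩, ⟨q3, by simp, h23⟩⟩
    simp only [Finset.mem_insert, Finset.mem_singleton]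
    push_neg
    exact ⟨h12.ne', h23.ne⟩
  rw [eq_true (he2)] at e2
  rw [eq_false (he1)] at e1
  rw [← e1] at e2
  exact absurd e2 (by simp)

/-- `𝔥 ≤ 𝔭𝔞𝔯₂`. -/
theorem frakH_le_parNum_two : frakH ≤ parNum 2 := by
  rw [parNum]
  refine le_csInf parSet_nonempty ?_
  rintro c ⟨P, hP, rfl⟩
  have hle : frakH ≤ Cardinal.mk ((fun π : Coloring 2 => {X : Set ℕ | X.Infinite ∧ AlmostHomog π X}) '' P) := by
    apply csInf_le (OrderBot.bddBelow _)
    refine ⟨_, ?_, ?_, rfl⟩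
    · rintro _ ⟨π, hπ, rfl⟩
      refine ⟨⟨fun X hX => hX.1, ?_⟩, ?_⟩
      · rintro X ⟨hXinf, K, c, hXc⟩ Y hY hYX
        refine ⟨hY, K ∪ hYX.toFinset, c, ?_⟩
        intro s hs
        apply hXc
        intro x hx
        have hx' := hs hx
        rw [Set.mem_diff, Finset.coe_union, Set.Finite.coe_toFinset, Set.mem_union] at hx'
        push_neg at hx'
        refine ⟨?_, hx'.2.1⟩
        by_contra hxX
        exact hx'.2.2 ⟨hx'.1, hxX⟩
      · intro A hA
        obtain ⟨B, hBA, hBinf, c, hB⟩ := ramsey2 π A hA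
        exact ⟨B, hBA, hBinf, hBinf, ∅, c, fun s hs => hB s (by simpa using hs)⟩
    · ext X
      simp only [Set.mem_sInter, Set.mem_empty_iff_false, iff_false]
      intro hX
      obtain ⟨π0, hπ0, _⟩ := hP Set.univ Set.infinite_univ
      have hXinf : X.Infinite := (hX _ ⟨π0, hπ0, rfl⟩).1
      obtain ⟨π, hπ, hnah⟩ := hP X hXinf
      exact hnah (hX _ ⟨π, hπ, rfl⟩).2
  exact hle.trans Cardinal.mk_image_le
end

section
/- 𝔥 ≤ 𝔤 and 𝔤 ≤ 𝔡. -/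
open Filter

/-- A family `G ⊆ [ℕ]^ℕ` is *groupwise dense* if it is open in the lower topology and
for every interval partition of `ℕ` (given by a strictly increasing `a : ℕ → ℕ` with
`a 0 = 0`, with intervals `[a k, a (k+1))`) there are infinitely many intervals of
the partition whose union belongs to `G`. -/
def GroupwiseDense (G : Set (Set ℕ)) : Prop :=
  LowerOpen G ∧
  ∀ a : ℕ → ℕ, StrictMono a → a 0 = 0 →
    ∃ S : Set ℕ, S.Infinite ∧ (⋃ k ∈ S, Set.Ico (a k) (a (k + 1))) ∈ G

/-- The groupwise density number `𝔤`: the least cardinality of a family of groupwise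
dense subsets of `[ℕ]^ℕ` with empty intersection. -/
noncomputable def frakG : Cardinal :=
  sInf {c | ∃ F : Set (Set (Set ℕ)), (∀ G ∈ F, GroupwiseDense G) ∧
    ⋂₀ F = ∅ ∧ Cardinal.mk F = c}

/-- From an infinite set of naturals, choose elements above any bound. -/
lemma infinite_exists_ge {A : Set ℕ} (hA : A.Infinite) (n : ℕ) : ∃ m, m ∈ A ∧ n ≤ m := by
  obtain ⟨m, hm⟩ := (hA.diff (Set.finite_Iio n)).nonempty
  exact ⟨m, hm.1, not_lt.1 hm.2⟩

/-- Every groupwise dense family is dense in the lower topology. -/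
lemma GroupwiseDense.lowerDense {G : Set (Set ℕ)} (hG : GroupwiseDense G) : LowerDense G := by
  intro A hA
  choose e he1 he2 using fun n => infinite_exists_ge hA n
  set a : ℕ → ℕ := fun k => Nat.rec 0 (fun _ p => e p + 1) k with ha
  have hsucc : ∀ k, a (k + 1) = e (a k) + 1 := fun k => rfl
  have hmono : StrictMono a := strictMono_nat_of_lt_succ fun k => by
    rw [hsucc]; exact lt_of_le_of_lt (he2 (a k)) (Nat.lt_succ_self _)
  obtain ⟨S, hS, hU⟩ := hG.2 a hmono rfl
  set U := ⋃ k ∈ S, Set.Ico (a k) (a (k + 1)) with hUdef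
  have hmemU : ∀ k ∈ S, e (a k) ∈ U := fun k hk => by
    refine Set.mem_biUnion hk ⟨he2 _, ?_⟩
    rw [hsucc]; exact Nat.lt_succ_self _
  have hBinf : (A ∩ U).Infinite := by
    have hsub : (fun k => e (a k)) '' S ⊆ A ∩ U := by
      rintro _ ⟨k, hk, rfl⟩
      exact ⟨he1 _, hmemU k hk⟩
    have hm : StrictMono fun k => e (a k) := fun i j hij => by
      calc e (a i) < a (i + 1) := by rw [hsucc]; exact Nat.lt_succ_self _
        _ ≤ a j := hmono.monotone hij
        _ ≤ e (a j) := he2 _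
    exact ((hS.image hm.injective.injOn)).mono hsub
  refine ⟨A ∩ U, Set.inter_subset_left, hBinf, ?_⟩
  refine hG.1.2 U hU (A ∩ U) hBinf ?_
  rw [Set.diff_eq_empty.2 Set.inter_subset_right]
  exact Set.finite_empty

/-- The groupwise dense family attached to `f`. -/
def Gf (f : ℕ → ℕ) : Set (Set ℕ) :=
  {X | X.Infinite ∧ ∃ᶠ n in atTop, X ∩ Set.Ico n (f n) = ∅}

lemma Gf_groupwiseDense (f : ℕ → ℕ) : GroupwiseDense (Gf f) := by
  constructor
  · constructor
    · exact fun X hX => hX.1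
    · rintro X ⟨hXinf, hXfreq⟩ Y hYinf hfin
      refine ⟨hYinf, ?_⟩
      obtain ⟨m, hm⟩ := hfin.bddAbove
      refine ((hXfreq.and_eventually (eventually_ge_atTop (m + 1))).mono ?_)
      rintro n ⟨hemp, hn⟩
      rw [Set.eq_empty_iff_forall_notMem]
      rintro y ⟨hyY, hy1, hy2⟩
      have hyX : y ∈ X := by
        by_contra hyX
        have : y ≤ m := hm ⟨hyY, hyX⟩
        omega
      have : y ∈ X ∩ Set.Ico n (f n) := ⟨hyX, hy1, hy2⟩
      rw [hemp] at this
      exact this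
  · intro a hamono ha0
    set k : ℕ → ℕ := fun j => Nat.rec 0 (fun _ p => max (p + 1) (f (a (p + 1)))) j with hk
    have hksucc : ∀ j, k (j + 1) = max (k j + 1) (f (a (k j + 1))) := fun j => rfl
    have hkmono : StrictMono k := strictMono_nat_of_lt_succ fun j => by
      rw [hksucc]; exact lt_of_lt_of_le (Nat.lt_succ_self _) (le_max_left _ _)
    refine ⟨Set.range k, Set.infinite_range_of_injective hkmono.injective, ?_⟩
    set X := ⋃ i ∈ Set.range k, Set.Ico (a i) (a (i + 1)) with hX
    have hmemX : ∀ {m i}, i ∈ Set.range k → a i ≤ m → m < a (i + 1) → m ∈ X :=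
      fun {m i} hi h1 h2 => Set.mem_biUnion hi ⟨h1, h2⟩
    constructor
    · -- X is infinite
      have : ∀ j : ℕ, a (k j) ∈ X := fun j =>
        hmemX ⟨j, rfl⟩ le_rfl (hamono (Nat.lt_succ_self _))
      exact Set.infinite_of_injective_forall_mem (hamono.comp hkmono).injective this
    · -- frequently X ∩ [n, f n) = ∅
      rw [frequently_atTop]
      intro N
      refine ⟨a (k N + 1), ?_, ?_⟩
      · calc N ≤ k N + 1 := (hkmono.le_apply).trans (Nat.le_succ _)
          _ ≤ a (k N + 1) := hamono.le_apply
      · rw [Set.eq_empty_iff_forall_notMem]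
        rintro m ⟨hmX, hm1, hm2⟩
        obtain ⟨j, hi1, hi2⟩ : ∃ j, a (k j) ≤ m ∧ m < a (k j + 1) := by
          rw [hX] at hmX
          simpa using hmX
        -- m ≥ a (k N + 1) and m < a (k j + 1) gives k N < k j, so j ≥ N+1
        have h1 : k N + 1 < k j + 1 := by
          have := lt_of_le_of_lt hm1 hi2
          exact hamono.lt_iff_lt.1 this
        have hj : N + 1 ≤ j := by
          by_contra h
          have : j ≤ N := by omega
          have := hkmono.monotone this
          omega
        have h2 : f (a (k N + 1)) ≤ k (N + 1) := by
          rw [hksucc]; exact le_max_right _ _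
        have h3 : k (N + 1) ≤ k j := hkmono.monotone hj
        have : m < a (k j) := lt_of_lt_of_le hm2
          (le_trans h2 (le_trans (hamono.le_apply.trans (hamono.monotone h3)) le_rfl))
        omega
      
lemma Gf_sInter_empty {D : Set (ℕ → ℕ)} (hD : ∀ g : ℕ → ℕ, ∃ f ∈ D, DominatedBy g f) :
    ⋂₀ (Gf '' D) = ∅ := by
  rw [Set.eq_empty_iff_forall_notMem]
  intro X hX
  have hXmem : ∀ f ∈ D, X ∈ Gf f := fun f hf => hX _ ⟨f, hf, rfl⟩
  obtain ⟨f0, hf0D, _⟩ := hD id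
  have hXinf : X.Infinite := (hXmem f0 hf0D).1
  choose e he1 he2 using fun n => infinite_exists_ge hXinf n
  obtain ⟨f, hfD, hdom⟩ := hD (fun n => e n + 1)
  obtain ⟨n, hemp, hlt⟩ := ((hXmem f hfD).2.and_eventually hdom).exists
  have hlt' : e n + 1 < f n := hlt
  have : e n ∈ X ∩ Set.Ico n (f n) := ⟨he1 n, he2 n, by omega⟩
  rw [hemp] at this
  exact this

/-- `𝔥 ≤ 𝔤` and `𝔤 ≤ 𝔡`. -/
theorem frakH_le_frakG_and_frakG_le_frakD : frakH ≤ frakG ∧ frakG ≤ frakD := by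
  have hmemG : ∀ D : Set (ℕ → ℕ), (∀ g : ℕ → ℕ, ∃ f ∈ D, DominatedBy g f) →
      Cardinal.mk ↥(Gf '' D) ∈ {c | ∃ F : Set (Set (Set ℕ)), (∀ G ∈ F, GroupwiseDense G) ∧
        ⋂₀ F = ∅ ∧ Cardinal.mk F = c} := by
    intro D hD
    exact ⟨Gf '' D, by rintro G ⟨f, _, rfl⟩; exact Gf_groupwiseDense f,
      Gf_sInter_empty hD, rfl⟩
  have hunivdom : ∀ g : ℕ → ℕ, ∃ f ∈ (Set.univ : Set (ℕ → ℕ)), DominatedBy g f :=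
    fun g => ⟨fun n => g n + 1, trivial, Eventually.of_forall fun n => Nat.lt_succ_self _⟩
  constructor
  · refine csInf_le_csInf (OrderBot.bddBelow _) ⟨_, hmemG _ hunivdom⟩ ?_
    rintro c ⟨F, hF, hint, hcard⟩
    exact ⟨F, fun O hO => ⟨(hF O hO).1, (hF O hO).lowerDense⟩, hint, hcard⟩
  · have hne : {c | ∃ D : Set (ℕ → ℕ), (∀ g : ℕ → ℕ, ∃ f ∈ D, DominatedBy g f) ∧
        Cardinal.mk D = c}.Nonempty := ⟨_, Set.univ, hunivdom, rfl⟩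
    obtain ⟨D, hDdom, hDcard⟩ := csInf_mem hne
    calc frakG ≤ Cardinal.mk ↥(Gf '' D) := csInf_le (OrderBot.bddBelow _) (hmemG D hDdom)
      _ ≤ Cardinal.mk ↥D := Cardinal.mk_image_le
      _ = frakD := hDcard
end
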